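/- arXiv:2507.09920 — 4 statements merged into one kernel-verified Lean document; each statement's English description precedes it below -/
import Mathlib

section
/- Let p > 1. There exists a constant c_p ≥ 1, depending only on p, such that for all real numbers a, b with (a,b) ≠ (0,0), (1/c_p)(|a|+|b|)^{p-2} ≤ ∫_0^1 |a + t b|^{p-2} dt ≤ c_p (|a|+|b|)^{p-2}. -/
open MeasureTheory Real intervalIntegral

lemma absRpowInt {q : ℝ} (hq : -1 < q) (a b : ℝ) :
    IntervalIntegrable (fun x : ℝ => |x| ^ q) volume a b := by
  suffices h : ∀ c : ℝ, IntervalIntegrable (fun x : ℝ => |x| ^ q) volume 0 c from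
    (h a).symm.trans (h b)
  have h0 : ∀ c : ℝ, 0 ≤ c → IntervalIntegrable (fun x : ℝ => |x| ^ q) volume 0 c := by
    intro c hc
    have h1 := intervalIntegrable_rpow' (a := 0) (b := c) hq
    rw [intervalIntegrable_iff] at h1 ⊢
    refine h1.congr_fun ?_ measurableSet_uIoc
    intro x hx
    rw [Set.uIoc_of_le hc] at hx
    simp only []
    rw [abs_of_pos hx.1]
  intro c
  rcases le_total 0 c with hc | hc
  · exact h0 c hc
  · have h2 := (IntervalIntegrable.iff_comp_neg (by simp)).mp (h0 (-c) (by linarith))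
    simpa using h2

lemma absRpowEq {q : ℝ} (hq : -1 < q) {e : ℝ} (he : 0 ≤ e) :
    ∫ x in (0:ℝ)..e, |x| ^ q = e ^ (q + 1) / (q + 1) := by
  rw [show (∫ x in (0:ℝ)..e, |x| ^ q) = ∫ x in (0:ℝ)..e, x ^ q from
    intervalIntegral.integral_congr fun x hx => by
      rw [Set.uIcc_of_le he] at hx; rw [abs_of_nonneg hx.1]]
  rw [integral_rpow (Or.inl hq), Real.zero_rpow (by linarith), sub_zero]

lemma absRpowBound {q : ℝ} (hq : -1 < q) (c d : ℝ) :
    ∫ x in c..d, |x| ^ q ≤ (|c| ^ (q + 1) + |d| ^ (q + 1)) / (q + 1) := by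
  have key : ∀ e : ℝ, ∫ x in (0:ℝ)..e, |x| ^ q ≤ |e| ^ (q + 1) / (q + 1) := by
    intro e
    rcases le_total 0 e with he | he
    · rw [absRpowEq hq he, abs_of_nonneg he]
    · have h1 : 0 ≤ ∫ x in e..(0:ℝ), |x| ^ q :=
        intervalIntegral.integral_nonneg he fun x _ => Real.rpow_nonneg (abs_nonneg x) q
      have h2 : (0:ℝ) ≤ |e| ^ (q + 1) / (q + 1) :=
        div_nonneg (Real.rpow_nonneg (abs_nonneg e) _) (by linarith)
      rw [intervalIntegral.integral_symm]
      linarith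
  have hc0 : (∫ x in c..(0:ℝ), |x| ^ q) = ∫ x in (0:ℝ)..(-c), |x| ^ q := by
    have h := intervalIntegral.integral_comp_neg (a := (0:ℝ)) (b := -c) (fun x => |x| ^ q)
    simp only [abs_neg, neg_neg, neg_zero] at h
    exact h.symm
  have hsplit : (∫ x in c..d, |x| ^ q)
      = (∫ x in c..(0:ℝ), |x| ^ q) + ∫ x in (0:ℝ)..d, |x| ^ q :=
    (intervalIntegral.integral_add_adjacent_intervals (absRpowInt hq c 0) (absRpowInt hq 0 d)).symm
  have k1 := key (-c)
  have k2 := key d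
  rw [abs_neg] at k1
  rw [hsplit, hc0]
  rw [add_div]
  linarith

theorem stmt_0 (p : ℝ) (hp : 1 < p) :
    ∃ c : ℝ, 1 ≤ c ∧ ∀ a b : ℝ, (a, b) ≠ (0, 0) →
      (1 / c) * (|a| + |b|) ^ (p - 2) ≤ (∫ t in (0:ℝ)..1, |a + t * b| ^ (p - 2)) ∧
      (∫ t in (0:ℝ)..1, |a + t * b| ^ (p - 2)) ≤ c * (|a| + |b|) ^ (p - 2) := by
  have hq1 : (-1:ℝ) < p - 2 := by linarith
  set c : ℝ := 6 ^ (p - 1) + 18 / (p - 1) + 3 with hcdef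
  have h6 : (1:ℝ) ≤ 6 ^ (p - 1) := by
    calc (1:ℝ) = 6 ^ (0:ℝ) := (Real.rpow_zero 6).symm
      _ ≤ 6 ^ (p - 1) := Real.rpow_le_rpow_of_exponent_le (by norm_num) (by linarith)
  have h18 : (0:ℝ) < 18 / (p - 1) := by
    have : (0:ℝ) < p - 1 := by linarith
    positivity
  have hc1 : 1 ≤ c := by rw [hcdef]; linarith
  have hcpos : 0 < c := by linarith
  refine ⟨c, hc1, fun a b hab => ?_⟩
  have hs : 0 < |a| + |b| := by
    rcases eq_or_ne a 0 with ha | ha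
    · have hb : b ≠ 0 := fun hb => hab (by rw [ha, hb])
      have := abs_pos.mpr hb
      have := abs_nonneg a
      linarith
    · have := abs_pos.mpr ha
      have := abs_nonneg b
      linarith
  set s : ℝ := |a| + |b| with hsdef
  have hspow : 0 < s ^ (p - 2) := Real.rpow_pos_of_pos hs _
  -- integrability of the integrand
  have hInt : IntervalIntegrable (fun t => |a + t * b| ^ (p - 2)) volume 0 1 := by
    rcases eq_or_ne b 0 with hb | hb
    · simp only [hb, mul_zero, add_zero]
      exact intervalIntegrable_const
    · have h1 : IntervalIntegrable (fun x : ℝ => |x| ^ (p - 2)) volume a (a + b) :=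
        absRpowInt hq1 _ _
      have h2 := h1.comp_add_right a
      simp only [sub_self, add_sub_cancel_left] at h2
      have h3 := h2.comp_mul_left (c := b)
      rw [zero_div, div_self hb] at h3
      have heq : (fun t : ℝ => |a + t * b| ^ (p - 2))
          = fun x : ℝ => |b * x + a| ^ (p - 2) := by
        funext t; rw [show a + t * b = b * t + a by ring]
      rw [heq]; exact h3
  -- pointwise upper bound on the base
  have hub : ∀ t ∈ Set.Icc (0:ℝ) 1, |a + t * b| ≤ s := by
    intro t ht
    have h1 : |a + t * b| ≤ |a| + t * |b| := by
      calc |a + t * b| ≤ |a| + |t * b| := abs_add_le _ _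
        _ = |a| + t * |b| := by rw [abs_mul, abs_of_nonneg ht.1]
    nlinarith [abs_nonneg b, ht.2, ht.1]
  -- useful reverse triangle form
  have hrev : ∀ t : ℝ, 0 ≤ t → |a| ≤ |a + t * b| + t * |b| := by
    intro t ht
    calc |a| = |(a + t * b) + (-(t * b))| := by congr 1; ring
      _ ≤ |a + t * b| + |(-(t * b))| := abs_add_le _ _
      _ = |a + t * b| + t * |b| := by rw [abs_neg, abs_mul, abs_of_nonneg ht]
  rcases le_or_gt 2 p with hp2 | hp2
  -- CASE p ≥ 2
  · have hq0 : (0:ℝ) ≤ p - 2 := by linarith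
    have hcont : Continuous (fun t : ℝ => |a + t * b| ^ (p - 2)) := by
      apply Continuous.rpow_const
      · exact (continuous_const.add (continuous_id.mul continuous_const)).abs
      · intro t; exact Or.inr hq0
    constructor
    · -- lower bound
      have hmax : s / 3 ≤ |a| ∨ s / 3 ≤ |a + b| := by
        by_contra h
        push_neg at h
        have h1 : |b| ≤ |a + b| + |a| := by
          calc |b| = |(a + b) + (-a)| := by congr 1; ring
            _ ≤ |a + b| + |(-a)| := abs_add_le _ _
            _ = |a + b| + |a| := by rw [abs_neg]
        have := hsdef
        linarith [h.1, h.2]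
      have key : ∃ u v : ℝ, 0 ≤ u ∧ u ≤ v ∧ v ≤ 1 ∧ v - u = 1/6 ∧
          ∀ t ∈ Set.Icc u v, s / 6 ≤ |a + t * b| := by
        rcases hmax with hA | hB
        · refine ⟨0, 1/6, le_refl _, by norm_num, by norm_num, by norm_num, ?_⟩
          intro t ht
          have h1 := hrev t ht.1
          have h2 : t * |b| ≤ (1/6) * s := by
            nlinarith [abs_nonneg b, ht.2, ht.1, abs_nonneg a]
          linarith
        · refine ⟨5/6, 1, by norm_num, by norm_num, le_refl _, by norm_num, ?_⟩
          intro t ht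
          have h1 : |a + b| ≤ |a + t * b| + (1 - t) * |b| := by
            calc |a + b| = |(a + t * b) + ((1 - t) * b)| := by congr 1; ring
              _ ≤ |a + t * b| + |(1 - t) * b| := abs_add_le _ _
              _ = |a + t * b| + (1 - t) * |b| := by
                  rw [abs_mul, abs_of_nonneg (by linarith [ht.2] : (0:ℝ) ≤ 1 - t)]
          have h2 : (1 - t) * |b| ≤ (1/6) * s := by
            nlinarith [abs_nonneg b, ht.1, ht.2, abs_nonneg a]
          linarith
      obtain ⟨u, v, hu0, huv, hv1, hlen, hlow⟩ := key
      have hI1 : IntervalIntegrable (fun t => |a + t * b| ^ (p - 2)) volume 0 u :=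
        hcont.intervalIntegrable _ _
      have hI2 : IntervalIntegrable (fun t => |a + t * b| ^ (p - 2)) volume u v :=
        hcont.intervalIntegrable _ _
      have hI3 : IntervalIntegrable (fun t => |a + t * b| ^ (p - 2)) volume v 1 :=
        hcont.intervalIntegrable _ _
      have hsplit : (∫ t in (0:ℝ)..1, |a + t * b| ^ (p - 2))
          = (∫ t in (0:ℝ)..u, |a + t * b| ^ (p - 2))
            + ((∫ t in u..v, |a + t * b| ^ (p - 2)) + ∫ t in v..(1:ℝ), |a + t * b| ^ (p - 2)) := by
        rw [intervalIntegral.integral_add_adjacent_intervals hI2 hI3,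
          intervalIntegral.integral_add_adjacent_intervals hI1 (hI2.trans hI3)]
      have hpos1 : 0 ≤ ∫ t in (0:ℝ)..u, |a + t * b| ^ (p - 2) :=
        intervalIntegral.integral_nonneg hu0 fun t _ => Real.rpow_nonneg (abs_nonneg _) _
      have hpos3 : 0 ≤ ∫ t in v..(1:ℝ), |a + t * b| ^ (p - 2) :=
        intervalIntegral.integral_nonneg hv1 fun t _ => Real.rpow_nonneg (abs_nonneg _) _
      have hmid : (1/6 : ℝ) * (s/6) ^ (p - 2) ≤ ∫ t in u..v, |a + t * b| ^ (p - 2) := by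
        have hmono := intervalIntegral.integral_mono_on (μ := volume) huv
          intervalIntegrable_const hI2
          (fun t ht => Real.rpow_le_rpow (by positivity) (hlow t ht) hq0)
        rw [intervalIntegral.integral_const, hlen] at hmono
        simpa using hmono
      have hkey : (1/6 : ℝ) * (s/6) ^ (p - 2) = s ^ (p - 2) / 6 ^ (p - 1) := by
        rw [Real.div_rpow hs.le (by norm_num : (0:ℝ) ≤ 6),
          show p - 1 = (p - 2) + 1 by ring,
          Real.rpow_add_one (by norm_num : (6:ℝ) ≠ 0)]
        ring
      have hfinal : 1 / c * s ^ (p - 2) ≤ s ^ (p - 2) / 6 ^ (p - 1) := by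
        rw [div_mul_eq_mul_div, one_mul]
        gcongr
        all_goals first
          | exact hspow.le
          | exact Real.rpow_pos_of_pos (by norm_num) _
          | (rw [hcdef]; linarith)
      rw [hsplit]
      calc 1 / c * s ^ (p - 2) ≤ s ^ (p - 2) / 6 ^ (p - 1) := hfinal
        _ = (1/6 : ℝ) * (s/6) ^ (p - 2) := hkey.symm
        _ ≤ _ := by linarith
    · -- upper bound
      have hU : (∫ t in (0:ℝ)..1, |a + t * b| ^ (p - 2)) ≤ s ^ (p - 2) := by
        have hmono := intervalIntegral.integral_mono_on (μ := volume) (by norm_num : (0:ℝ) ≤ 1)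
          (hcont.intervalIntegrable _ _) intervalIntegrable_const
          (fun t ht => Real.rpow_le_rpow (abs_nonneg _) (hub t ht) hq0)
        simpa using hmono
      linarith [le_mul_of_one_le_left hspow.le hc1]
  -- CASE 1 < p < 2
  · have hq0 : p - 2 ≤ 0 := by linarith
    rcases eq_or_ne b 0 with hb | hb
    · -- b = 0
      have ha : a ≠ 0 := fun h => hab (by rw [h, hb])
      have hint0 : (∫ t in (0:ℝ)..1, |a + t * b| ^ (p - 2)) = s ^ (p - 2) := by
        simp only [hb, mul_zero, add_zero, intervalIntegral.integral_const, hsdef, abs_zero,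
          add_zero]
        simp
      have h1c : 1 / c ≤ 1 := by rw [div_le_one hcpos]; exact hc1
      rw [hint0]
      constructor
      · linarith [mul_le_mul_of_nonneg_right h1c hspow.le]
      · linarith [le_mul_of_one_le_left hspow.le hc1]
    · -- b ≠ 0
      constructor
      · -- lower bound
        have hae : (fun _ : ℝ => s ^ (p - 2))
            ≤ᵐ[volume.restrict (Set.Icc (0:ℝ) 1)] fun t => |a + t * b| ^ (p - 2) := by
          have hnull : ∀ᵐ t : ℝ, t ∉ ({-a / b} : Set ℝ) :=
            measure_eq_zero_iff_ae_notMem.mp (measure_singleton _)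
          filter_upwards [ae_restrict_of_ae hnull,
            ae_restrict_mem measurableSet_Icc] with t ht hmem
          have hne : a + t * b ≠ 0 := by
            intro h
            apply ht
            simp only [Set.mem_singleton_iff]
            rw [eq_div_iff hb]
            linarith
          exact Real.rpow_le_rpow_of_nonpos (abs_pos.mpr hne) (hub t hmem) hq0
        have hmono := intervalIntegral.integral_mono_ae_restrict (μ := volume)
          (by norm_num : (0:ℝ) ≤ 1) intervalIntegrable_const hInt hae
        have h1c : 1 / c ≤ 1 := by rw [div_le_one hcpos]; exact hc1
        simp only [intervalIntegral.integral_const, sub_zero, one_smul] at hmono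
        linarith [mul_le_mul_of_nonneg_right h1c hspow.le]
      · -- upper bound
        rcases le_or_gt (2 * |b|) |a| with hA | hB
        · -- |a| ≥ 2|b| : integrand bounded by (s/3)^(p-2)
          have ha : a ≠ 0 := by
            intro h
            rw [h, abs_zero] at hA
            have := abs_pos.mpr hb
            linarith
          have hlow : ∀ t ∈ Set.Icc (0:ℝ) 1, s / 3 ≤ |a + t * b| := by
            intro t ht
            have h1 := hrev t ht.1
            have h2 : t * |b| ≤ |b| := by nlinarith [abs_nonneg b, ht.2, ht.1]
            have h3 : 0 < |a| := abs_pos.mpr ha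
            rw [hsdef]
            linarith
          have hU : (∫ t in (0:ℝ)..1, |a + t * b| ^ (p - 2)) ≤ (s/3) ^ (p - 2) := by
            have hmono := intervalIntegral.integral_mono_on (μ := volume)
              (by norm_num : (0:ℝ) ≤ 1) hInt intervalIntegrable_const
              (fun t ht =>
                Real.rpow_le_rpow_of_nonpos (by positivity) (hlow t ht) hq0)
            simpa using hmono
          have hkey : (s/3) ^ (p - 2) ≤ 3 * s ^ (p - 2) := by
            have h31 : (1:ℝ) ≤ 3 ^ (p - 2) * 3 := by
              rw [show (3:ℝ) ^ (p-2) * 3 = 3 ^ ((p-2)+1) by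
                rw [Real.rpow_add_one (by norm_num : (3:ℝ) ≠ 0)]]
              calc (1:ℝ) = 3 ^ (0:ℝ) := (Real.rpow_zero 3).symm
                _ ≤ 3 ^ ((p-2)+1) := Real.rpow_le_rpow_of_exponent_le (by norm_num) (by linarith)
            rw [Real.div_rpow hs.le (by norm_num : (0:ℝ) ≤ 3),
              div_le_iff₀ (Real.rpow_pos_of_pos (by norm_num) _)]
            nlinarith [hspow, mul_le_mul_of_nonneg_left h31 hspow.le]
          have hc3 : (3:ℝ) ≤ c := by rw [hcdef]; linarith
          calc (∫ t in (0:ℝ)..1, |a + t * b| ^ (p - 2)) ≤ (s/3) ^ (p - 2) := hU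
            _ ≤ 3 * s ^ (p - 2) := hkey
            _ ≤ c * s ^ (p - 2) := mul_le_mul_of_nonneg_right hc3 hspow.le
        · -- |a| < 2|b|
          have hbpos : 0 < |b| := abs_pos.mpr hb
          have hpp : (0:ℝ) < p - 1 := by linarith
          have hcb : |a / b| < 2 := by
            rw [abs_div, div_lt_iff₀ hbpos]; linarith
          have hkey : (s/3) ^ (p - 2) ≤ 3 * s ^ (p - 2) := by
            have h31 : (1:ℝ) ≤ 3 ^ (p - 2) * 3 := by
              rw [show (3:ℝ) ^ (p-2) * 3 = 3 ^ ((p-2)+1) by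
                rw [Real.rpow_add_one (by norm_num : (3:ℝ) ≠ 0)]]
              calc (1:ℝ) = 3 ^ (0:ℝ) := (Real.rpow_zero 3).symm
                _ ≤ 3 ^ ((p-2)+1) := Real.rpow_le_rpow_of_exponent_le (by norm_num) (by linarith)
            rw [Real.div_rpow hs.le (by norm_num : (0:ℝ) ≤ 3),
              div_le_iff₀ (Real.rpow_pos_of_pos (by norm_num) _)]
            nlinarith [hspow, mul_le_mul_of_nonneg_left h31 hspow.le]
          have step1 : (∫ t in (0:ℝ)..1, |a + t * b| ^ (p - 2))
              = |b| ^ (p - 2) * ∫ x in (a/b)..(1 + a/b), |x| ^ (p - 2) := by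
            have e1 : (∫ t in (0:ℝ)..1, |a + t * b| ^ (p - 2))
                = ∫ t in (0:ℝ)..1, |b| ^ (p - 2) * |t + a/b| ^ (p - 2) := by
              refine intervalIntegral.integral_congr fun t _ => ?_
              show |a + t * b| ^ (p - 2) = |b| ^ (p - 2) * |t + a / b| ^ (p - 2)
              rw [show a + t * b = b * (t + a / b) by field_simp; ring, abs_mul,
                Real.mul_rpow (abs_nonneg b) (abs_nonneg _)]
            have e3 : (∫ t in (0:ℝ)..1, |t + a/b| ^ (p - 2))
                = ∫ x in (a/b)..(1 + a/b), |x| ^ (p - 2) := by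
              have h := intervalIntegral.integral_comp_add_right (a := (0:ℝ)) (b := 1)
                (fun x : ℝ => |x| ^ (p - 2)) (a/b)
              simpa using h
            rw [e1, intervalIntegral.integral_const_mul, e3]
          have hpow3 : ∀ x : ℝ, 0 ≤ x → x ≤ 3 → x ^ (p - 1) ≤ 3 := by
            intro x hx h3
            calc x ^ (p-1) ≤ 3 ^ (p-1) := Real.rpow_le_rpow hx h3 (by linarith)
              _ ≤ 3 ^ (1:ℝ) := Real.rpow_le_rpow_of_exponent_le (by norm_num) (by linarith)
              _ = 3 := Real.rpow_one 3
          have step2 : (∫ x in (a/b)..(1 + a/b), |x| ^ (p - 2)) ≤ 6 / (p - 1) := by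
            have hB := absRpowBound hq1 (a/b) (1 + a/b)
            rw [show p - 2 + 1 = p - 1 by ring] at hB
            have e1 : |a/b| ^ (p-1) ≤ 3 := hpow3 _ (abs_nonneg _) (by linarith)
            have e2 : |1 + a/b| ^ (p-1) ≤ 3 := by
              refine hpow3 _ (abs_nonneg _) ?_
              calc |1 + a/b| ≤ |(1:ℝ)| + |a/b| := abs_add_le _ _
                _ ≤ 3 := by rw [abs_one]; linarith
            have hsum : |a/b| ^ (p-1) + |1 + a/b| ^ (p-1) ≤ 6 := by linarith
            calc (∫ x in (a/b)..(1 + a/b), |x| ^ (p - 2))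
                ≤ (|a/b| ^ (p-1) + |1 + a/b| ^ (p-1)) / (p - 1) := hB
              _ ≤ 6 / (p - 1) := div_le_div_of_nonneg_right hsum hpp.le
          have step3 : |b| ^ (p - 2) ≤ (s/3) ^ (p - 2) :=
            Real.rpow_le_rpow_of_nonpos (by positivity) (by rw [hsdef]; linarith) hq0
          have Inonneg : 0 ≤ ∫ x in (a/b)..(1 + a/b), |x| ^ (p - 2) :=
            intervalIntegral.integral_nonneg (by linarith)
              (fun x _ => Real.rpow_nonneg (abs_nonneg _) _)
          have hc18 : 18 / (p - 1) ≤ c := by rw [hcdef]; linarith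
          rw [step1]
          calc |b| ^ (p - 2) * ∫ x in (a/b)..(1 + a/b), |x| ^ (p - 2)
              ≤ (s/3) ^ (p - 2) * (6 / (p - 1)) :=
                mul_le_mul step3 step2 Inonneg (Real.rpow_nonneg (by positivity) _)
            _ ≤ (3 * s ^ (p - 2)) * (6 / (p - 1)) :=
                mul_le_mul_of_nonneg_right hkey (div_nonneg (by norm_num) (by linarith))
            _ = 18 / (p - 1) * s ^ (p - 2) := by ring
            _ ≤ c * s ^ (p - 2) := mul_le_mul_of_nonneg_right hc18 hspow.le
end

section
/- Let p ∈ (1,2]. Then for all a, b ∈ ℝ, |J_p(a) − J_p(b)| ≤ 2|a−b|^{p−1}. -/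
/-- For `p > 1`, `J_p(t) = |t|^{p-2} t`, with the convention `J_p(0) = 0`
(this holds automatically since `0 ^ y = 0` for `y ≠ 0` and the extra factor `t = 0`). -/
noncomputable def Jp (p t : ℝ) : ℝ := |t| ^ (p - 2) * t

lemma rpow_add_le_add_rpow' {q : ℝ} (hq0 : 0 ≤ q) (hq1 : q ≤ 1) {x y : ℝ}
    (hx : 0 ≤ x) (hy : 0 ≤ y) : (x + y) ^ q ≤ x ^ q + y ^ q := by
  have h := NNReal.rpow_add_le_add_rpow x.toNNReal y.toNNReal hq0 hq1
  have := NNReal.coe_le_coe.mpr h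
  simpa [NNReal.coe_rpow, Real.coe_toNNReal _ hx, Real.coe_toNNReal _ hy,
    Real.coe_toNNReal _ (add_nonneg hx hy)] using this

lemma rpow_sub_le {q : ℝ} (hq0 : 0 ≤ q) (hq1 : q ≤ 1) {a b : ℝ}
    (hb : 0 ≤ b) (hab : b ≤ a) : a ^ q - b ^ q ≤ (a - b) ^ q := by
  have h := rpow_add_le_add_rpow' hq0 hq1 hb (sub_nonneg.mpr hab)
  rw [add_sub_cancel] at h
  linarith

lemma Jp_neg (p t : ℝ) : Jp p (-t) = -Jp p t := by
  simp [Jp, abs_neg, mul_comm]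

lemma Jp_of_nonneg {p t : ℝ} (hp : 1 < p) (ht : 0 ≤ t) : Jp p t = t ^ (p - 1) := by
  rcases eq_or_lt_of_le ht with h | h
  · simp [Jp, ← h, Real.zero_rpow (by linarith : p - 1 ≠ 0)]
  · rw [Jp, abs_of_pos h, ← Real.rpow_add_one h.ne']
    ring_nf

lemma key {p : ℝ} (hp1 : 1 < p) (hp2 : p ≤ 2) {a b : ℝ} (hba : b ≤ a) :
    |Jp p a - Jp p b| ≤ 2 * |a - b| ^ (p - 1) := by
  have hq0 : (0:ℝ) ≤ p - 1 := by linarith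
  have hq1 : p - 1 ≤ 1 := by linarith
  rcases le_or_gt 0 b with hb | hb
  · -- 0 ≤ b ≤ a
    have ha : 0 ≤ a := le_trans hb hba
    rw [Jp_of_nonneg hp1 ha, Jp_of_nonneg hp1 hb, abs_of_nonneg (sub_nonneg.mpr hba)]
    have h1 : a ^ (p-1) - b ^ (p-1) ≤ (a - b) ^ (p-1) := rpow_sub_le hq0 hq1 hb hba
    have h2 : a ^ (p-1) - b ^ (p-1) ≤ 2 * (a - b) ^ (p-1) := by
      nlinarith [Real.rpow_nonneg (sub_nonneg.mpr hba) (p-1)]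
    rw [abs_of_nonneg (sub_nonneg.mpr (Real.rpow_le_rpow hb hba hq0))]
    linarith
  · rcases le_or_gt 0 a with ha | ha
    · -- b < 0 ≤ a
      have hJa : Jp p a = a ^ (p-1) := Jp_of_nonneg hp1 ha
      have hJb : Jp p b = -((-b) ^ (p-1)) := by
        have h1 := Jp_neg p (-b)
        rw [neg_neg] at h1
        rw [h1, Jp_of_nonneg hp1 (by linarith)]
      rw [hJa, hJb, sub_neg_eq_add, abs_of_nonneg (sub_nonneg.mpr hba)]
      have hnb : (0:ℝ) ≤ -b := by linarith
      have h1 : a ^ (p-1) ≤ (a - b) ^ (p-1) :=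
        Real.rpow_le_rpow ha (by linarith) hq0
      have h2 : (-b) ^ (p-1) ≤ (a - b) ^ (p-1) :=
        Real.rpow_le_rpow hnb (by linarith) hq0
      have hab : (0:ℝ) ≤ a ^ (p-1) + (-b) ^ (p-1) := by positivity
      rw [abs_of_nonneg hab]
      linarith
    · -- b ≤ a < 0
      have hJa : Jp p a = -((-a) ^ (p-1)) := by
        have h1 := Jp_neg p (-a)
        rw [neg_neg] at h1
        rw [h1, Jp_of_nonneg hp1 (by linarith)]
      have hJb : Jp p b = -((-b) ^ (p-1)) := by
        have h1 := Jp_neg p (-b)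
        rw [neg_neg] at h1
        rw [h1, Jp_of_nonneg hp1 (by linarith)]
      rw [hJa, hJb, abs_of_nonneg (sub_nonneg.mpr hba)]
      have hna : (0:ℝ) ≤ -a := by linarith
      have hba' : -a ≤ -b := by linarith
      have h1 : (-b) ^ (p-1) - (-a) ^ (p-1) ≤ (a - b) ^ (p-1) := by
        have := rpow_sub_le hq0 hq1 hna hba'
        have he : -b - -a = a - b := by ring
        rwa [he] at this
      have hd : -((-a) ^ (p-1)) - -((-b) ^ (p-1)) = (-b) ^ (p-1) - (-a) ^ (p-1) := by ring
      rw [hd, abs_of_nonneg (by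
        have := Real.rpow_le_rpow hna hba' hq0
        linarith)]
      nlinarith [Real.rpow_nonneg (sub_nonneg.mpr hba) (p-1)]

theorem stmt_1 (p : ℝ) (hp1 : 1 < p) (hp2 : p ≤ 2) (a b : ℝ) :
    |Jp p a - Jp p b| ≤ 2 * |a - b| ^ (p - 1) := by
  rcases le_total b a with h | h
  · exact key hp1 hp2 h
  · have := key hp1 hp2 h
    rwa [abs_sub_comm (Jp p b), abs_sub_comm b a] at this
end

section
/- Let n ≥ 1, let a ∈ ℝⁿ with a ≠ 0, let η₀, δ₀ ∈ (0, 1/2), let β > 0, and define the truncated cone 𝒞 = {z ∈ ℝⁿ : |z| < δ₀|a| and |⟨a, z⟩| ≥ (1 − η₀)|a||z|}. Then there exists a constant c_n > 0, depending only on n, such that ∫_𝒞 |z|^{β−n} dz ≥ c_n η₀^{(n−1)/2} β^{−1} (δ₀|a|)^β. -/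
open MeasureTheory Metric Set Pointwise
open scoped ENNReal NNReal
set_option maxHeartbeats 1000000

theorem cap_aux1 {e q w : ℝ} (he : 0 < e) (he' : e < 1/2) (hq0 : 0 ≤ q) (hq : q ≤ e/4)
    (hw : 1/2 < w) (hw' : w < 3/5) : (1 - e)^2 * (w^2 + q) ≤ w^2 := by
  have h1 : (1 - e)^2 * q ≤ q := by
    nlinarith [mul_nonneg hq0 (mul_nonneg he.le (show (0:ℝ) ≤ 2 - e by linarith))]
  have h2 : e * (2 - e) * (1/4) ≤ e * (2 - e) * w^2 := by
    have : (0:ℝ) ≤ w^2 - 1/4 := by nlinarith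
    nlinarith [mul_nonneg (mul_nonneg he.le (show (0:ℝ) ≤ 2 - e by linarith)) this]
  have h3 : e / 4 ≤ e * (2 - e) * (1/4) := by nlinarith
  nlinarith

theorem cap_aux2 {e x w : ℝ} (he : 0 < e) (he' : e < 1/2) (hx : 0 ≤ x) (hw : 0 < w)
    (h : (1 - e)^2 * x^2 ≤ w^2) : (1 - e) * x ≤ w := by
  nlinarith [mul_nonneg (by linarith : (0:ℝ) ≤ 1 - e) hx]

theorem cap_aux3 {q w x : ℝ} (hq0 : 0 ≤ q) (hq : q ≤ 1/8) (hw : 1/2 < w) (hw' : w < 3/5)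
    (hx : 0 ≤ x) (h : x^2 = w^2 + q) : x < 1 := by nlinarith

theorem cap_vol (n : ℕ) (hn : 1 ≤ n) (a : EuclideanSpace ℝ (Fin n)) (ha : a ≠ 0)
    (η₀ : ℝ) (hη : 0 < η₀) (hη' : η₀ < 1/2) :
    ENNReal.ofReal ((1/10) * (Real.sqrt η₀ / Real.sqrt n) ^ (n - 1)) ≤
      volume {z : EuclideanSpace ℝ (Fin n) |
        ‖z‖ < 1 ∧ (1 - η₀) * ‖a‖ * ‖z‖ ≤ |(inner ℝ a z : ℝ)|} := by
  haveI : NeZero n := ⟨by omega⟩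
  have hna : (0:ℝ) < ‖a‖ := norm_pos_iff.mpr ha
  have hn0 : (0:ℝ) < n := by exact_mod_cast Nat.pos_of_ne_zero (by omega)
  set u : EuclideanSpace ℝ (Fin n) := ‖a‖⁻¹ • a with hu_def
  have hu : ‖u‖ = 1 := by
    rw [hu_def, norm_smul, norm_inv, norm_norm, inv_mul_cancel₀ hna.ne']
  have horth : Orthonormal ℝ (({0} : Set (Fin n)).restrict (fun _ : Fin n => u)) := by
    constructor
    · intro i; exact hu
    · intro i j hij
      exact absurd (Subtype.ext (i.2.trans j.2.symm)) hij
  obtain ⟨b, hb⟩ := Orthonormal.exists_orthonormalBasis_extension_of_card_eq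
    (ι := Fin n) (by simp [finrank_euclideanSpace_fin]) horth
  have hb0 : b 0 = u := hb 0 rfl
  set s : ℝ := Real.sqrt η₀ / (2 * Real.sqrt n) with hs_def
  have hsqn : (0:ℝ) < Real.sqrt n := Real.sqrt_pos.mpr hn0
  have hs : 0 < s := div_pos (Real.sqrt_pos.mpr hη) (by positivity)
  have hs2 : s ^ 2 = η₀ / (4 * n) := by
    rw [hs_def, div_pow, mul_pow, Real.sq_sqrt hη.le, Real.sq_sqrt hn0.le]
    ring
  set P : Set (Fin n → ℝ) :=
    Set.univ.pi fun i => Ioo (if i = 0 then (1/2:ℝ) else -s) (if i = 0 then (3/5:ℝ) else s)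
    with hP_def
  have hPmeas : MeasurableSet P := MeasurableSet.univ_pi fun i => measurableSet_Ioo
  set e := (MeasurableEquiv.toLp 2 (Fin n → ℝ)).symm with he_def
  set Q : Set (EuclideanSpace ℝ (Fin n)) := e ⁻¹' P with hQ_def
  have hQmeas : MeasurableSet Q := e.measurable hPmeas
  have hincl : (⇑b.repr) ⁻¹' Q ⊆ {z : EuclideanSpace ℝ (Fin n) |
      ‖z‖ < 1 ∧ (1 - η₀) * ‖a‖ * ‖z‖ ≤ |(inner ℝ a z : ℝ)|} := by
    intro z hz
    set w : EuclideanSpace ℝ (Fin n) := b.repr z with hw_def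
    have hw : ∀ i : Fin n, w i ∈ Ioo (if i = 0 then (1/2:ℝ) else -s) (if i = 0 then (3/5:ℝ) else s) := by
      intro i
      have := hz
      simp only [hQ_def, hP_def, Set.mem_preimage, Set.mem_pi, Set.mem_univ, forall_true_left] at this
      exact this i
    have hw0 : w 0 ∈ Ioo (1/2:ℝ) (3/5) := by simpa using hw 0
    have hw0l : (1/2:ℝ) < w 0 := hw0.1
    have hw0r : w 0 < (3/5:ℝ) := hw0.2
    have hQ' : ∑ i ∈ Finset.univ.erase 0, (w i)^2 ≤ η₀ / 4 := by
      have hcard : (Finset.univ.erase (0 : Fin n)).card = n - 1 := by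
        rw [Finset.card_erase_of_mem (Finset.mem_univ _), Finset.card_univ, Fintype.card_fin]
      have hbound : ∀ i ∈ Finset.univ.erase (0 : Fin n), (w i)^2 ≤ s^2 := by
        intro i hi
        have hi0 : i ≠ 0 := Finset.ne_of_mem_erase hi
        have := hw i
        rw [if_neg hi0, if_neg hi0] at this
        have : |w i| ≤ s := le_of_lt (abs_lt.mpr ⟨this.1, this.2⟩)
        calc (w i)^2 = |w i|^2 := (sq_abs _).symm
          _ ≤ s^2 := by nlinarith [abs_nonneg (w i)]
      calc ∑ i ∈ Finset.univ.erase 0, (w i)^2 ≤ (Finset.univ.erase (0:Fin n)).card • s^2 :=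
            Finset.sum_le_card_nsmul _ _ _ hbound
        _ = (n - 1 : ℕ) * s^2 := by rw [hcard, nsmul_eq_mul]
        _ ≤ n * s^2 := by
            apply mul_le_mul_of_nonneg_right _ (sq_nonneg s)
            exact_mod_cast Nat.cast_le.mpr (Nat.sub_le n 1)
        _ = η₀ / 4 := by rw [hs2]; field_simp
    have hQ0 : 0 ≤ ∑ i ∈ Finset.univ.erase 0, (w i)^2 :=
      Finset.sum_nonneg fun i _ => sq_nonneg _
    have hN2 : ‖z‖^2 = (w 0)^2 + ∑ i ∈ Finset.univ.erase 0, (w i)^2 := by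
      have h1 : ‖z‖ = ‖w‖ := (b.repr.norm_map z).symm
      have h2 : ‖w‖^2 = ∑ i, (w i)^2 := by
        rw [EuclideanSpace.norm_eq, Real.sq_sqrt (Finset.sum_nonneg fun i _ => by positivity)]
        congr 1; ext i; rw [Real.norm_eq_abs, sq_abs]
      rw [h1, h2, ← Finset.add_sum_erase _ _ (Finset.mem_univ (0 : Fin n))]
    have hQ8 : ∑ i ∈ Finset.univ.erase 0, (w i)^2 ≤ 1/8 := by linarith
    constructor
    · exact cap_aux3 hQ0 hQ8 hw0l hw0r (norm_nonneg z) hN2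
    · have hiz : (inner ℝ a z : ℝ) = ‖a‖ * w 0 := by
        have h1 : w 0 = (inner ℝ u z : ℝ) := by
          rw [hw_def]; rw [b.repr_apply_apply z 0, hb0]
        have h2 : a = ‖a‖ • u := by rw [hu_def, smul_inv_smul₀ hna.ne']
        calc (inner ℝ a z : ℝ) = inner ℝ (‖a‖ • u) z := by rw [← h2]
          _ = ‖a‖ * (inner ℝ u z : ℝ) := real_inner_smul_left _ _ _
          _ = ‖a‖ * w 0 := by rw [h1]
      rw [hiz]
      have hw0pos : 0 < w 0 := by linarith
      rw [abs_of_pos (by positivity)]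
      have hkey : (1 - η₀)^2 * ‖z‖^2 ≤ (w 0)^2 := by
        rw [hN2]; exact cap_aux1 hη hη' hQ0 hQ' hw0l hw0r
      have hfin : (1 - η₀) * ‖z‖ ≤ w 0 := cap_aux2 hη hη' (norm_nonneg z) hw0pos hkey
      calc (1 - η₀) * ‖a‖ * ‖z‖ = ((1 - η₀) * ‖z‖) * ‖a‖ := by ring
        _ ≤ w 0 * ‖a‖ := mul_le_mul_of_nonneg_right hfin hna.le
        _ = ‖a‖ * w 0 := by ring
  have step1 : volume ((⇑b.repr) ⁻¹' Q) = volume Q :=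
    b.measurePreserving_repr.measure_preimage hQmeas.nullMeasurableSet
  have step2 : volume Q = volume P :=
    (EuclideanSpace.volume_preserving_symm_measurableEquiv_toLp (Fin n)).measure_preimage
      hPmeas.nullMeasurableSet
  have step3 : volume P = ENNReal.ofReal (1/10) * ENNReal.ofReal (2*s) ^ (n-1) := by
    rw [hP_def, volume_pi_pi]
    have : ∀ i : Fin n, volume (Ioo (if i = 0 then (1/2:ℝ) else -s) (if i = 0 then (3/5:ℝ) else s))
        = if i = 0 then ENNReal.ofReal (1/10) else ENNReal.ofReal (2*s) := by
      intro i
      by_cases hi : i = 0 <;> simp [hi, Real.volume_Ioo] <;> norm_num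
      · rw [one_div, ENNReal.ofReal_inv_of_pos (by norm_num)]; simp
      · rw [← two_mul, ENNReal.ofReal_mul (by norm_num)]; simp
    rw [Finset.prod_congr rfl (fun i _ => this i)]
    rw [← Finset.mul_prod_erase _ _ (Finset.mem_univ (0 : Fin n))]
    rw [if_pos rfl]
    congr 1
    rw [Finset.prod_congr rfl (fun i hi => if_neg (Finset.ne_of_mem_erase hi)),
      Finset.prod_const, Finset.card_erase_of_mem (Finset.mem_univ _), Finset.card_univ,
      Fintype.card_fin]
  calc ENNReal.ofReal ((1/10) * (Real.sqrt η₀ / Real.sqrt n) ^ (n - 1))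
      = ENNReal.ofReal (1/10) * ENNReal.ofReal (2*s) ^ (n-1) := by
        rw [ENNReal.ofReal_mul (by norm_num), ← ENNReal.ofReal_pow (by positivity)]
        congr 2
        rw [hs_def]; field_simp
    _ = volume ((⇑b.repr) ⁻¹' Q) := by rw [step1, step2, step3]
    _ ≤ _ := measure_mono hincl

theorem cone_scale (n : ℕ) (a : EuclideanSpace ℝ (Fin n)) (η₀ : ℝ) {r : ℝ} (hr : 0 < r) :
    volume {z : EuclideanSpace ℝ (Fin n) | ‖z‖ < r ∧ (1 - η₀) * ‖a‖ * ‖z‖ ≤ |(inner ℝ a z : ℝ)|}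
      = ENNReal.ofReal (r ^ n) *
        volume {z : EuclideanSpace ℝ (Fin n) | ‖z‖ < 1 ∧ (1 - η₀) * ‖a‖ * ‖z‖ ≤ |(inner ℝ a z : ℝ)|} := by
  have hinv : (0:ℝ) < r⁻¹ := inv_pos.mpr hr
  have hset : {z : EuclideanSpace ℝ (Fin n) | ‖z‖ < r ∧ (1 - η₀) * ‖a‖ * ‖z‖ ≤ |(inner ℝ a z : ℝ)|}
      = r • {z : EuclideanSpace ℝ (Fin n) | ‖z‖ < 1 ∧ (1 - η₀) * ‖a‖ * ‖z‖ ≤ |(inner ℝ a z : ℝ)|} := by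
    ext z
    rw [Set.mem_smul_set_iff_inv_smul_mem₀ hr.ne']
    simp only [Set.mem_setOf_eq, norm_smul, norm_inv, Real.norm_eq_abs, abs_of_pos hr,
      real_inner_smul_right, abs_mul, abs_of_pos hinv]
    constructor
    · rintro ⟨h1, h2⟩
      refine ⟨?_, ?_⟩
      · rw [← div_eq_inv_mul, div_lt_one hr]; exact h1
      · calc (1 - η₀) * ‖a‖ * (r⁻¹ * ‖z‖) = r⁻¹ * ((1 - η₀) * ‖a‖ * ‖z‖) := by ring
          _ ≤ r⁻¹ * |(inner ℝ a z : ℝ)| := by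
              exact mul_le_mul_of_nonneg_left h2 hinv.le
    · rintro ⟨h1, h2⟩
      rw [← div_eq_inv_mul, div_lt_one hr] at h1
      refine ⟨h1, ?_⟩
      have := mul_le_mul_of_nonneg_left h2 hr.le
      calc (1 - η₀) * ‖a‖ * ‖z‖ = r * ((1 - η₀) * ‖a‖ * (r⁻¹ * ‖z‖)) := by
            field_simp
        _ ≤ r * (r⁻¹ * |(inner ℝ a z : ℝ)|) := this
        _ = |(inner ℝ a z : ℝ)| := by field_simp
  rw [hset, Measure.addHaar_smul_of_nonneg volume hr.le, finrank_euclideanSpace_fin]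

theorem rpow_sqrt_pow {η : ℝ} (hη : 0 < η) (n : ℕ) (hn : 1 ≤ n) :
    η ^ (((n : ℝ) - 1)/2) = Real.sqrt η ^ (n - 1) := by
  have hc : ((n - 1 : ℕ) : ℝ) = (n : ℝ) - 1 := by
    rw [Nat.cast_sub hn, Nat.cast_one]
  calc η ^ (((n : ℝ) - 1)/2) = η ^ ((1/2 : ℝ) * ((n - 1 : ℕ) : ℝ)) := by
        rw [hc]; ring_nf
    _ = (η ^ (1/2 : ℝ)) ^ ((n - 1 : ℕ) : ℝ) := Real.rpow_mul hη.le _ _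
    _ = (η ^ (1/2 : ℝ)) ^ (n - 1 : ℕ) := Real.rpow_natCast _ _
    _ = Real.sqrt η ^ (n - 1) := by rw [← Real.sqrt_eq_rpow]

theorem dy_low {R β : ℝ} {n k N : ℕ} (hR : 0 < R) (hβ : 0 < β) (hn : 1 ≤ n) (hβn : β ≤ n)
    (hkN : k < N) (hN : ((N:ℝ) - 1) ≤ 1/β) :
    R ^ β * (1/4) ≤ (R * (2:ℝ) ^ (-(k:ℝ))) ^ (β - (n:ℝ)) *
      ((R * (2:ℝ) ^ (-(k:ℝ))) ^ n - (R * (2:ℝ) ^ (-(k:ℝ) - 1)) ^ n) := by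
  set t : ℝ := (2:ℝ) ^ (-(k:ℝ)) with ht_def
  have ht0 : 0 < t := Real.rpow_pos_of_pos two_pos _
  have hRt : 0 < R * t := mul_pos hR ht0
  have h2 : (2:ℝ) ^ (-(k:ℝ) - 1) = t / 2 := by
    rw [Real.rpow_sub two_pos, Real.rpow_one]
  have e1 : (R * t) ^ n - (R * (2:ℝ) ^ (-(k:ℝ) - 1)) ^ n = (R * t) ^ n * (1 - (1/2:ℝ)^n) := by
    rw [h2]
    have : R * (t / 2) = (R * t) * (1/2) := by ring
    rw [this, mul_pow]
    ring
  have e2 : (R * t) ^ (β - (n:ℝ)) * ((R * t):ℝ) ^ n = (R * t) ^ β := by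
    rw [← Real.rpow_natCast (R * t) n, ← Real.rpow_add hRt, sub_add_cancel]
  have e3 : (R * t) ^ β = R ^ β * t ^ β := Real.mul_rpow hR.le ht0.le
  have e4 : t ^ β = (2:ℝ) ^ (-(k:ℝ) * β) := by
    rw [ht_def]; exact (Real.rpow_mul (by norm_num : (0:ℝ) ≤ 2) _ _).symm
  have hk1 : (k:ℝ) * β ≤ 1 := by
    have hk : (k:ℝ) ≤ (N:ℝ) - 1 := by
      have : (k:ℝ) + 1 ≤ (N:ℝ) := by exact_mod_cast Nat.succ_le_of_lt hkN
      linarith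
    have : (k:ℝ) ≤ 1/β := hk.trans hN
    calc (k:ℝ) * β ≤ (1/β) * β := mul_le_mul_of_nonneg_right this hβ.le
      _ = 1 := by field_simp
  have e5 : (1/2:ℝ) ≤ t ^ β := by
    rw [e4]
    calc (1/2:ℝ) = (2:ℝ) ^ (-1:ℝ) := by rw [Real.rpow_neg_one]; norm_num
      _ ≤ (2:ℝ) ^ (-(k:ℝ) * β) :=
          Real.rpow_le_rpow_of_exponent_le one_le_two (by linarith)
  have e6 : (1/2:ℝ) ≤ 1 - (1/2:ℝ)^n := by
    have : (1/2:ℝ)^n ≤ (1/2:ℝ)^1 := pow_le_pow_of_le_one (by norm_num) (by norm_num) hn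
    simp only [pow_one] at this
    linarith
  have hRβ : 0 ≤ R ^ β := (Real.rpow_pos_of_pos hR β).le
  calc R ^ β * (1/4) = R ^ β * ((1/2) * (1/2)) := by norm_num
    _ ≤ R ^ β * (t ^ β * (1 - (1/2:ℝ)^n)) := by
        apply mul_le_mul_of_nonneg_left _ hRβ
        exact mul_le_mul e5 e6 (by norm_num) (le_trans (by norm_num) e5)
    _ = (R * t) ^ (β - (n:ℝ)) * ((R * t) ^ n - (R * (2:ℝ) ^ (-(k:ℝ) - 1)) ^ n) := by
        conv_rhs => rw [e1]
        rw [show (R * t) ^ (β - (n:ℝ)) * ((R * t) ^ n * (1 - (1/2:ℝ)^n))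
            = ((R * t) ^ (β - (n:ℝ)) * (R * t) ^ n) * (1 - (1/2:ℝ)^n) from by ring, e2, e3]
        ring

theorem thin_low {R β : ℝ} (n : ℕ) (hR : 0 < R) (hn : 1 ≤ n) (hβ : (n:ℝ) < β) :
    R ^ β * (1/4) * β⁻¹ ≤ ((1 - 1/(2*β)) * R) ^ (β - (n:ℝ)) *
      (R ^ n - ((1 - 1/(2*β)) * R) ^ n) := by
  have hn1 : (1:ℝ) ≤ n := by exact_mod_cast hn
  have hβ1 : 1 ≤ β := le_trans hn1 hβ.le
  have hβ0 : 0 < β := lt_of_lt_of_le one_pos hβ1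
  set θ : ℝ := 1 - 1/(2*β) with hθ_def
  have hθhalf : (1/2:ℝ) ≤ θ := by
    have : 1/(2*β) ≤ 1/2 := by
      apply div_le_div_of_nonneg_left (by norm_num) (by norm_num) (by linarith)
    rw [hθ_def]; linarith
  have hθ0 : 0 < θ := lt_of_lt_of_le (by norm_num) hθhalf
  have hθ1 : θ ≤ 1 := by
    rw [hθ_def]
    have : 0 < 1/(2*β) := by positivity
    linarith
  have hθR : 0 < θ * R := mul_pos hθ0 hR
  have e1 : R ^ n - (θ * R) ^ n = R ^ n * (1 - θ^n) := by rw [mul_pow]; ring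
  have e2 : (θ * R) ^ (β - (n:ℝ)) = θ ^ (β - (n:ℝ)) * R ^ (β - (n:ℝ)) :=
    Real.mul_rpow hθ0.le hR.le
  have e3 : R ^ (β - (n:ℝ)) * (R:ℝ) ^ n = R ^ β := by
    rw [← Real.rpow_natCast R n, ← Real.rpow_add hR, sub_add_cancel]
  have h4 : θ ^ β ≤ θ ^ (β - (n:ℝ)) :=
    Real.rpow_le_rpow_of_exponent_ge hθ0 hθ1 (by linarith [Nat.cast_nonneg (α := ℝ) n])
  have h5 : (1/2:ℝ) ≤ θ ^ β := by
    have hb := one_add_mul_self_le_rpow_one_add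
      (show (-1:ℝ) ≤ -(1/(2*β)) by
        have : 1/(2*β) ≤ 1/2 := by
          apply div_le_div_of_nonneg_left (by norm_num) (by norm_num) (by linarith)
        linarith) hβ1
    have : (1:ℝ) + β * (-(1/(2*β))) = 1/2 := by field_simp; ring
    rw [this] at hb
    have heq : (1:ℝ) + -(1/(2*β)) = θ := by rw [hθ_def]; ring
    rw [heq] at hb
    exact hb
  have h6 : 1/(2*β) ≤ 1 - θ^n := by
    have : θ^n ≤ θ := pow_le_of_le_one hθ0.le hθ1 (by omega)
    rw [hθ_def] at this ⊢
    linarith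
  have hRβ : 0 ≤ R ^ β := (Real.rpow_pos_of_pos hR β).le
  have key : (1/2:ℝ) * (1/(2*β)) ≤ θ ^ (β - (n:ℝ)) * (1 - θ^n) := by
    apply mul_le_mul (h5.trans h4) h6 (by positivity) (le_trans (by positivity) (h5.trans h4))
  calc R ^ β * (1/4) * β⁻¹ = R ^ β * ((1/2) * (1/(2*β))) := by
        have h : (1/2:ℝ) * (1/(2*β)) = (1/4) * β⁻¹ := by field_simp; ring
        rw [h]; ring
    _ ≤ R ^ β * (θ ^ (β - (n:ℝ)) * (1 - θ^n)) := mul_le_mul_of_nonneg_left key hRβ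
    _ = (θ * R) ^ (β - (n:ℝ)) * (R ^ n - (θ * R) ^ n) := by
        conv_rhs => rw [e1, e2]
        rw [show θ ^ (β - (n:ℝ)) * R ^ (β - (n:ℝ)) * (R ^ n * (1 - θ^n))
            = (R ^ (β - (n:ℝ)) * (R:ℝ) ^ n) * (θ ^ (β - (n:ℝ)) * (1 - θ^n)) from by ring, e3]

theorem dy_up {R β : ℝ} (n k : ℕ) (hR : 0 < R) :
    (R * (2:ℝ) ^ (-(k:ℝ) - 1)) ^ (β - (n:ℝ)) * (R * (2:ℝ) ^ (-(k:ℝ))) ^ n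
      = (R ^ β * (2:ℝ) ^ ((n:ℝ) - β)) * ((2:ℝ) ^ (-β)) ^ k := by
  have h20 : (0:ℝ) ≤ 2 := by norm_num
  set t : ℝ := (2:ℝ) ^ (-(k:ℝ)) with ht_def
  have ht0 : 0 < t := Real.rpow_pos_of_pos two_pos _
  have hRt : 0 < R * t := mul_pos hR ht0
  have e1 : R * (2:ℝ) ^ (-(k:ℝ) - 1) = (R * t) * (2:ℝ) ^ (-1:ℝ) := by
    rw [ht_def, Real.rpow_sub two_pos, Real.rpow_one, Real.rpow_neg_one]; ring
  have e2 : ((R * t) * (2:ℝ) ^ (-1:ℝ)) ^ (β - (n:ℝ))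
      = (R * t) ^ (β - (n:ℝ)) * ((2:ℝ) ^ (-1:ℝ)) ^ (β - (n:ℝ)) :=
    Real.mul_rpow hRt.le (Real.rpow_pos_of_pos two_pos _).le
  have e3 : (R * t) ^ (β - (n:ℝ)) * ((R * t) : ℝ) ^ n = (R * t) ^ β := by
    rw [← Real.rpow_natCast (R * t) n, ← Real.rpow_add hRt, sub_add_cancel]
  have e4 : ((2:ℝ) ^ (-1:ℝ)) ^ (β - (n:ℝ)) = (2:ℝ) ^ ((n:ℝ) - β) := by
    rw [← Real.rpow_mul h20]; congr 1; ring
  have e5 : (R * t) ^ β = R ^ β * t ^ β := Real.mul_rpow hR.le ht0.le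
  have e6 : t ^ β = ((2:ℝ) ^ (-β)) ^ k := by
    rw [ht_def, ← Real.rpow_natCast ((2:ℝ) ^ (-β)) k, ← Real.rpow_mul h20,
      ← Real.rpow_mul h20]
    congr 1; ring
  calc (R * (2:ℝ) ^ (-(k:ℝ) - 1)) ^ (β - (n:ℝ)) * (R * t) ^ n
      = (R * t) ^ (β - (n:ℝ)) * ((2:ℝ) ^ (-1:ℝ)) ^ (β - (n:ℝ)) * (R * t) ^ n := by
        rw [e1, e2]
    _ = (R * t) ^ (β - (n:ℝ)) * (R * t) ^ n * ((2:ℝ) ^ (-1:ℝ)) ^ (β - (n:ℝ)) := by ring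
    _ = (R ^ β * t ^ β) * (2:ℝ) ^ ((n:ℝ) - β) := by rw [e3, e4, e5]
    _ = (R ^ β * (2:ℝ) ^ ((n:ℝ) - β)) * ((2:ℝ) ^ (-β)) ^ k := by rw [e6]; ring

theorem stmt_9 (n : ℕ) (hn : 1 ≤ n) :
    ∃ c : ℝ, 0 < c ∧
      ∀ a : EuclideanSpace ℝ (Fin n), a ≠ 0 →
      ∀ η₀ δ₀ : ℝ, 0 < η₀ → η₀ < 1 / 2 → 0 < δ₀ → δ₀ < 1 / 2 →
      ∀ β : ℝ, 0 < β →
        c * η₀ ^ (((n : ℝ) - 1) / 2) * β⁻¹ * (δ₀ * ‖a‖) ^ β ≤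
          ∫ z in {z : EuclideanSpace ℝ (Fin n) |
              ‖z‖ < δ₀ * ‖a‖ ∧ (1 - η₀) * ‖a‖ * ‖z‖ ≤ |(inner ℝ a z : ℝ)|},
            ‖z‖ ^ (β - (n : ℝ)) := by
  haveI : NeZero n := ⟨by omega⟩
  have hn0 : (0:ℝ) < n := by exact_mod_cast Nat.pos_of_ne_zero (by omega)
  have hsqn : (0:ℝ) < Real.sqrt n := Real.sqrt_pos.mpr hn0
  refine ⟨(1/10) * (1 / Real.sqrt n)^(n-1) * ((1:ℝ)/2)^(n+2),
    mul_pos (mul_pos (by norm_num) (pow_pos (div_pos one_pos hsqn) _))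
      (pow_pos (by norm_num) _), ?_⟩
  intro a ha η₀ δ₀ hη hη' hδ hδ' β hβ
  have hna : (0:ℝ) < ‖a‖ := norm_pos_iff.mpr ha
  set c : ℝ := (1/10) * (1 / Real.sqrt n)^(n-1) * ((1:ℝ)/2)^(n+2) with hc_def
  have hcpos : 0 < c := mul_pos (mul_pos (by norm_num) (pow_pos (div_pos one_pos hsqn) _))
      (pow_pos (by norm_num) _)
  set R : ℝ := δ₀ * ‖a‖ with hR_def
  have hR : 0 < R := mul_pos hδ hna
  set S : ℝ → Set (EuclideanSpace ℝ (Fin n)) := fun r =>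
    {z | ‖z‖ < r ∧ (1 - η₀) * ‖a‖ * ‖z‖ ≤ |(inner ℝ a z : ℝ)|} with hS_def
  have hSR : {z : EuclideanSpace ℝ (Fin n) |
      ‖z‖ < R ∧ (1 - η₀) * ‖a‖ * ‖z‖ ≤ |(inner ℝ a z : ℝ)|} = S R := by rw [hS_def]
  rw [hSR]
  have hSmem : ∀ {r : ℝ} {z : EuclideanSpace ℝ (Fin n)}, z ∈ S r ↔
      (‖z‖ < r ∧ (1 - η₀) * ‖a‖ * ‖z‖ ≤ |(inner ℝ a z : ℝ)|) := by
    intro r z; rw [hS_def]; rfl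
  have hSmono : ∀ {r1 r2 : ℝ}, r1 ≤ r2 → S r1 ⊆ S r2 := by
    intro r1 r2 h z hz
    rw [hSmem] at hz ⊢
    exact ⟨lt_of_lt_of_le hz.1 h, hz.2⟩
  have hSmeas : ∀ r : ℝ, MeasurableSet (S r) := by
    intro r
    have heq : S r = {z : EuclideanSpace ℝ (Fin n) | ‖z‖ < r} ∩
          {z : EuclideanSpace ℝ (Fin n) | (1 - η₀) * ‖a‖ * ‖z‖ ≤ |(inner ℝ a z : ℝ)|} := rfl
    rw [heq]
    refine MeasurableSet.inter ?_ ?_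
    · exact measurableSet_lt measurable_norm measurable_const
    · refine (isClosed_le ?_ ?_).measurableSet
      · exact continuous_const.mul continuous_norm
      · exact (continuous_const.inner continuous_id).abs
  have hSsub : ∀ r : ℝ, S r ⊆ ball (0 : EuclideanSpace ℝ (Fin n)) r := by
    intro r z hz; rw [mem_ball_zero_iff]; exact (hSmem.mp hz).1
  have hSfin : ∀ r : ℝ, volume (S r) ≠ ⊤ :=
    fun r => ((measure_mono (hSsub r)).trans_lt measure_ball_lt_top).ne
  set v1 := volume (S 1) with hv1_def
  have hv1top : v1 ≠ ⊤ := hSfin 1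
  have hscale : ∀ {r : ℝ}, 0 < r → volume (S r) = ENNReal.ofReal (r^n) * v1 := by
    intro r hr
    rw [hv1_def]
    simp only [hS_def]
    exact cone_scale n a η₀ hr
  set Vη : ℝ := (1/10) * (Real.sqrt η₀ / Real.sqrt n)^(n-1) with hVη_def
  have hVη0 : 0 < Vη := mul_pos (by norm_num) (pow_pos (div_pos (Real.sqrt_pos.mpr hη) hsqn) _)
  have hcap : ENNReal.ofReal Vη ≤ v1 := by
    rw [hv1_def]
    simp only [hS_def]
    exact cap_vol n hn a ha η₀ hη hη'
  have hvol_diff : ∀ {r1 r2 : ℝ}, 0 < r1 → r1 ≤ r2 →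
      volume (S r2 \ S r1) = ENNReal.ofReal (r2^n - r1^n) * v1 := by
    intro r1 r2 h1 h12
    have h2 : 0 < r2 := lt_of_lt_of_le h1 h12
    rw [measure_diff (hSmono h12) (hSmeas r1).nullMeasurableSet (hSfin r1),
      hscale h1, hscale h2, ENNReal.ofReal_sub _ (by positivity : (0:ℝ) ≤ r1^n),
      ENNReal.sub_mul (fun _ _ => hv1top)]
  have hmem_ann : ∀ {r1 r2 : ℝ} {z : EuclideanSpace ℝ (Fin n)}, z ∈ S r2 \ S r1 →
      r1 ≤ ‖z‖ ∧ ‖z‖ < r2 := by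
    intro r1 r2 z hz
    obtain ⟨hz2, hz1⟩ := hz
    rw [hSmem] at hz2
    refine ⟨le_of_not_gt (fun hlt => hz1 (hSmem.mpr ⟨hlt, hz2.2⟩)), hz2.1⟩
  have hann_lb : ∀ {r1 r2 m : ℝ}, 0 < r1 → r1 ≤ r2 →
      (∀ z ∈ S r2 \ S r1, m ≤ ‖z‖ ^ (β - (n:ℝ))) →
      ENNReal.ofReal m * (ENNReal.ofReal (r2^n - r1^n) * v1) ≤
        ∫⁻ z in S r2 \ S r1, ENNReal.ofReal (‖z‖ ^ (β - (n:ℝ))) := by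
    intro r1 r2 m h1 h12 hm
    rw [← hvol_diff h1 h12]
    calc ENNReal.ofReal m * volume (S r2 \ S r1)
        = ∫⁻ _ in S r2 \ S r1, ENNReal.ofReal m := (setLIntegral_const _ _).symm
      _ ≤ _ := setLIntegral_mono' ((hSmeas r2).diff (hSmeas r1))
          (fun z hz => ENNReal.ofReal_le_ofReal (hm z hz))
  have hconv : ∫ z in S R, ‖z‖ ^ (β - (n:ℝ)) =
      (∫⁻ z in S R, ENNReal.ofReal (‖z‖ ^ (β - (n:ℝ)))).toReal :=
    integral_eq_lintegral_of_nonneg_ae (ae_of_all _ fun z => Real.rpow_nonneg (norm_nonneg z) _)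
      (measurable_norm.pow_const _).aestronglyMeasurable
  have hrp : η₀ ^ (((n : ℝ) - 1)/2) = Real.sqrt η₀ ^ (n - 1) := rpow_sqrt_pow hη n hn
  have hcnn : 0 ≤ c * η₀ ^ (((n : ℝ) - 1)/2) * β⁻¹ * R ^ β :=
    mul_nonneg (mul_nonneg (mul_nonneg hcpos.le (Real.rpow_nonneg hη.le _))
      (inv_nonneg.mpr hβ.le)) (Real.rpow_nonneg hR.le _)
  have hfinal : ∀ D : ℝ, R ^ β * (1/4) * β⁻¹ ≤ D →
      c * η₀ ^ (((n : ℝ) - 1)/2) * β⁻¹ * R ^ β ≤ D * Vη := by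
    intro D hD
    have hcVη : c * η₀ ^ (((n : ℝ) - 1)/2) = Vη * ((1:ℝ)/2)^(n+2) := by
      rw [hrp, hc_def, hVη_def, div_pow, div_pow, one_pow]
      have hne : Real.sqrt n ^ (n-1) ≠ 0 := pow_ne_zero _ hsqn.ne'
      field_simp
      rw [← mul_pow]; congr 1; field_simp
    have h4 : ((1:ℝ)/2)^(n+2) ≤ 1/4 := by
      calc ((1:ℝ)/2)^(n+2) ≤ ((1:ℝ)/2)^2 :=
            pow_le_pow_of_le_one (by norm_num) (by norm_num) (by omega)
        _ = 1/4 := by norm_num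
    have hRβ : 0 < R ^ β := Real.rpow_pos_of_pos hR β
    have hbase : 0 ≤ Vη * β⁻¹ * R ^ β :=
      mul_nonneg (mul_nonneg hVη0.le (inv_nonneg.mpr hβ.le)) hRβ.le
    calc c * η₀ ^ (((n : ℝ) - 1)/2) * β⁻¹ * R ^ β
        = (Vη * β⁻¹ * R ^ β) * ((1:ℝ)/2)^(n+2) := by
          rw [show c * η₀ ^ (((n : ℝ) - 1)/2) * β⁻¹ * R ^ β
            = (c * η₀ ^ (((n : ℝ) - 1)/2)) * (β⁻¹ * R ^ β) from by ring, hcVη]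
          ring
      _ ≤ (Vη * β⁻¹ * R ^ β) * (1/4) := mul_le_mul_of_nonneg_left h4 hbase
      _ = (R ^ β * (1/4) * β⁻¹) * Vη := by ring
      _ ≤ D * Vη := mul_le_mul_of_nonneg_right hD hVη0.le
  suffices hkey : (∫⁻ z in S R, ENNReal.ofReal (‖z‖ ^ (β - (n:ℝ)))) ≠ ⊤ ∧
      ENNReal.ofReal (c * η₀ ^ (((n : ℝ) - 1)/2) * β⁻¹ * R ^ β) ≤
        ∫⁻ z in S R, ENNReal.ofReal (‖z‖ ^ (β - (n:ℝ))) by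
    rw [hconv]
    have h2 := ENNReal.toReal_mono hkey.1 hkey.2
    rwa [ENNReal.toReal_ofReal hcnn] at h2
  rcases le_or_gt β (n:ℝ) with hcase | hcase
  · -- dyadic case : β ≤ n
    set N : ℕ := Nat.ceil (1/β) with hN_def
    have hN1 : 1/β ≤ (N:ℝ) := Nat.le_ceil _
    have hNceil : ((N:ℝ) - 1) ≤ 1/β := by
      have h := Nat.ceil_lt_add_one (show (0:ℝ) ≤ 1/β by positivity)
      rw [hN_def]
      push_cast
      linarith [h]
    have hr2pos : ∀ k : ℕ, 0 < R * (2:ℝ)^(-(k:ℝ)) :=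
      fun k => mul_pos hR (Real.rpow_pos_of_pos two_pos _)
    have hr1pos : ∀ k : ℕ, 0 < R * (2:ℝ)^(-(k:ℝ)-1) :=
      fun k => mul_pos hR (Real.rpow_pos_of_pos two_pos _)
    have hr12 : ∀ k : ℕ, R * (2:ℝ)^(-(k:ℝ)-1) ≤ R * (2:ℝ)^(-(k:ℝ)) :=
      fun k => mul_le_mul_of_nonneg_left
        (Real.rpow_le_rpow_of_exponent_le one_le_two (by linarith)) hR.le
    set A : ℕ → Set (EuclideanSpace ℝ (Fin n)) :=
      fun k => S (R * (2:ℝ)^(-(k:ℝ))) \ S (R * (2:ℝ)^(-(k:ℝ)-1)) with hA_def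
    have hAk : ∀ k : ℕ, A k = S (R * (2:ℝ)^(-(k:ℝ))) \ S (R * (2:ℝ)^(-(k:ℝ)-1)) := by
      intro k; rw [hA_def]
    have hAmeas : ∀ k, MeasurableSet (A k) := by
      intro k; rw [hAk]; exact (hSmeas _).diff (hSmeas _)
    have hAsubS : ∀ k : ℕ, A k ⊆ S R := by
      intro k
      rw [hAk]
      refine Set.Subset.trans diff_subset (hSmono ?_)
      calc R * (2:ℝ)^(-(k:ℝ)) ≤ R * 1 := mul_le_mul_of_nonneg_left
            (Real.rpow_le_one_of_one_le_of_nonpos one_le_two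
              (neg_nonpos.mpr (Nat.cast_nonneg k))) hR.le
        _ = R := mul_one R
    have hAdisj : Pairwise (Function.onFun Disjoint A) := by
      have key : ∀ k l : ℕ, k < l → Disjoint (A k) (A l) := by
        intro k l hkl
        rw [Set.disjoint_left]
        intro z hzk hzl
        rw [hAk] at hzk hzl
        apply hzk.2
        refine hSmono ?_ hzl.1
        apply mul_le_mul_of_nonneg_left _ hR.le
        apply Real.rpow_le_rpow_of_exponent_le one_le_two
        have : (k:ℝ) + 1 ≤ (l:ℝ) := by exact_mod_cast Nat.succ_le_of_lt hkl
        linarith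
      intro k l hkl
      rcases hkl.lt_or_gt with h | h
      · exact key k l h
      · exact (key l k h).symm
    have hterm : ∀ k, k < N → ENNReal.ofReal (R ^ β * (1/4) * Vη) ≤
        ∫⁻ z in A k, ENNReal.ofReal (‖z‖ ^ (β - (n:ℝ))) := by
      intro k hk
      have hpoint : ∀ z ∈ S (R * (2:ℝ)^(-(k:ℝ))) \ S (R * (2:ℝ)^(-(k:ℝ)-1)),
          (R * (2:ℝ)^(-(k:ℝ))) ^ (β - (n:ℝ)) ≤ ‖z‖ ^ (β - (n:ℝ)) := by
        intro z hz
        obtain ⟨hz1, hz2⟩ := hmem_ann hz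
        have hz0 : 0 < ‖z‖ := lt_of_lt_of_le (hr1pos k) hz1
        exact Real.rpow_le_rpow_of_nonpos hz0 hz2.le (by linarith)
      have hlbk := hann_lb (hr1pos k) (hr12 k) hpoint
      rw [hAk]
      refine le_trans ?_ hlbk
      have hm0 : 0 ≤ (R * (2:ℝ)^(-(k:ℝ))) ^ (β - (n:ℝ)) := Real.rpow_nonneg (hr2pos k).le _
      have hd0 : 0 ≤ (R * (2:ℝ)^(-(k:ℝ)))^n - (R * (2:ℝ)^(-(k:ℝ)-1))^n := by
        have := pow_le_pow_left₀ (hr1pos k).le (hr12 k) n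
        linarith
      calc ENNReal.ofReal (R ^ β * (1/4) * Vη)
          ≤ ENNReal.ofReal ((R * (2:ℝ)^(-(k:ℝ))) ^ (β - (n:ℝ)) *
              ((R * (2:ℝ)^(-(k:ℝ)))^n - (R * (2:ℝ)^(-(k:ℝ)-1))^n) * Vη) := by
            apply ENNReal.ofReal_le_ofReal
            exact mul_le_mul_of_nonneg_right (dy_low hR hβ hn hcase hk hNceil) hVη0.le
        _ = ENNReal.ofReal ((R * (2:ℝ)^(-(k:ℝ))) ^ (β - (n:ℝ)) *
              ((R * (2:ℝ)^(-(k:ℝ)))^n - (R * (2:ℝ)^(-(k:ℝ)-1))^n)) * ENNReal.ofReal Vη :=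
            ENNReal.ofReal_mul (mul_nonneg hm0 hd0)
        _ ≤ ENNReal.ofReal ((R * (2:ℝ)^(-(k:ℝ))) ^ (β - (n:ℝ)) *
              ((R * (2:ℝ)^(-(k:ℝ)))^n - (R * (2:ℝ)^(-(k:ℝ)-1))^n)) * v1 :=
            mul_le_mul_right hcap _
        _ = ENNReal.ofReal ((R * (2:ℝ)^(-(k:ℝ))) ^ (β - (n:ℝ))) *
              (ENNReal.ofReal ((R * (2:ℝ)^(-(k:ℝ)))^n - (R * (2:ℝ)^(-(k:ℝ)-1))^n) * v1) := by
            rw [ENNReal.ofReal_mul hm0, mul_assoc]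
    have hlow : ENNReal.ofReal (c * η₀ ^ (((n : ℝ) - 1)/2) * β⁻¹ * R ^ β) ≤
        ∫⁻ z in S R, ENNReal.ofReal (‖z‖ ^ (β - (n:ℝ))) := by
      calc ENNReal.ofReal (c * η₀ ^ (((n : ℝ) - 1)/2) * β⁻¹ * R ^ β)
          ≤ ENNReal.ofReal (β⁻¹ * (R ^ β * (1/4) * Vη)) := by
            apply ENNReal.ofReal_le_ofReal
            refine le_trans (hfinal (R ^ β * (1/4) * β⁻¹) le_rfl) (le_of_eq (by ring))
        _ = ENNReal.ofReal β⁻¹ * ENNReal.ofReal (R ^ β * (1/4) * Vη) :=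
            ENNReal.ofReal_mul (inv_nonneg.mpr hβ.le)
        _ ≤ (N : ℝ≥0∞) * ENNReal.ofReal (R ^ β * (1/4) * Vη) := by
            apply mul_le_mul_left
            rw [← ENNReal.ofReal_natCast N]
            apply ENNReal.ofReal_le_ofReal
            rw [inv_eq_one_div]
            exact hN1
        _ = ∑ _k ∈ Finset.range N, ENNReal.ofReal (R ^ β * (1/4) * Vη) := by
            rw [Finset.sum_const, Finset.card_range, nsmul_eq_mul]
        _ ≤ ∑ k ∈ Finset.range N, ∫⁻ z in A k, ENNReal.ofReal (‖z‖ ^ (β - (n:ℝ))) :=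
            Finset.sum_le_sum (fun k hk => hterm k (Finset.mem_range.mp hk))
        _ ≤ ∑' k, ∫⁻ z in A k, ENNReal.ofReal (‖z‖ ^ (β - (n:ℝ))) := ENNReal.sum_le_tsum _
        _ = ∫⁻ z in ⋃ k, A k, ENNReal.ofReal (‖z‖ ^ (β - (n:ℝ))) :=
            (lintegral_iUnion hAmeas hAdisj _).symm
        _ ≤ ∫⁻ z in S R, ENNReal.ofReal (‖z‖ ^ (β - (n:ℝ))) :=
            lintegral_mono_set (Set.iUnion_subset hAsubS)
    have hcover : S R ⊆ (⋃ k, A k) ∪ {0} := by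
      intro z hz
      by_cases hz0 : z = 0
      · exact Or.inr (by simp [hz0])
      · left
        have hzn : 0 < ‖z‖ := norm_pos_iff.mpr hz0
        have hzmem := hSmem.mp hz
        have hex : ∃ k : ℕ, R * (2:ℝ)^(-(k:ℝ)-1) ≤ ‖z‖ := by
          obtain ⟨k, hk⟩ := pow_unbounded_of_one_lt (R/‖z‖) one_lt_two
          refine ⟨k, ?_⟩
          have h2k : (2:ℝ)^(-(k:ℝ)) = ((2:ℝ)^k)⁻¹ := by
            rw [← Real.rpow_natCast 2 k, ← Real.rpow_neg (by norm_num)]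
          have hklt : R * (2:ℝ)^(-(k:ℝ)) ≤ ‖z‖ := by
            rw [h2k]
            rw [div_lt_iff₀ hzn] at hk
            rw [mul_inv_le_iff₀ (by positivity : (0:ℝ) < (2:ℝ)^k)]
            nlinarith [pow_pos (show (0:ℝ) < 2 by norm_num) k]
          exact le_trans (hr12 k) hklt
        have hk₀ := Nat.find_spec hex
        refine Set.mem_iUnion.mpr ⟨Nat.find hex, ?_⟩
        rw [hAk]
        refine ⟨hSmem.mpr ⟨?_, hzmem.2⟩, ?_⟩
        · rcases Nat.eq_zero_or_pos (Nat.find hex) with h0 | hpos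
          · rw [h0]
            simpa using hzmem.1
          · have hmin := Nat.find_min hex (Nat.sub_lt hpos one_pos)
            have hcast : -(((Nat.find hex - 1 : ℕ)):ℝ) - 1 = -((Nat.find hex : ℕ):ℝ) := by
              have h1 : ((Nat.find hex - 1 : ℕ):ℝ) = ((Nat.find hex : ℕ):ℝ) - 1 := by
                rw [Nat.cast_sub hpos, Nat.cast_one]
              rw [h1]; ring
            rw [hcast] at hmin
            exact lt_of_not_ge hmin
        · intro hzS
          exact absurd hk₀ (not_le_of_gt (hSmem.mp hzS).1)
    have hup : ∀ k : ℕ, ∫⁻ z in A k, ENNReal.ofReal (‖z‖ ^ (β - (n:ℝ)))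
        ≤ (ENNReal.ofReal (R ^ β * (2:ℝ) ^ ((n:ℝ) - β)) * v1) *
          (ENNReal.ofReal ((2:ℝ)^(-β)))^k := by
      intro k
      have hpt : ∀ z ∈ A k, ENNReal.ofReal (‖z‖ ^ (β - (n:ℝ)))
          ≤ ENNReal.ofReal ((R * (2:ℝ)^(-(k:ℝ)-1)) ^ (β - (n:ℝ))) := by
        intro z hz
        rw [hAk] at hz
        obtain ⟨hz1, _hz2⟩ := hmem_ann hz
        exact ENNReal.ofReal_le_ofReal
          (Real.rpow_le_rpow_of_nonpos (hr1pos k) hz1 (by linarith))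
      calc ∫⁻ z in A k, ENNReal.ofReal (‖z‖ ^ (β - (n:ℝ)))
          ≤ ∫⁻ _z in A k, ENNReal.ofReal ((R * (2:ℝ)^(-(k:ℝ)-1)) ^ (β - (n:ℝ))) :=
            setLIntegral_mono' (hAmeas k) hpt
        _ = ENNReal.ofReal ((R * (2:ℝ)^(-(k:ℝ)-1)) ^ (β - (n:ℝ))) * volume (A k) :=
            setLIntegral_const _ _
        _ ≤ ENNReal.ofReal ((R * (2:ℝ)^(-(k:ℝ)-1)) ^ (β - (n:ℝ))) *
            (ENNReal.ofReal ((R * (2:ℝ)^(-(k:ℝ)))^n) * v1) := by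
            apply mul_le_mul_right
            calc volume (A k) ≤ volume (S (R * (2:ℝ)^(-(k:ℝ)))) := by
                  rw [hAk]; exact measure_mono diff_subset
              _ = _ := hscale (hr2pos k)
        _ = ENNReal.ofReal ((R * (2:ℝ)^(-(k:ℝ)-1)) ^ (β - (n:ℝ)) *
              (R * (2:ℝ)^(-(k:ℝ)))^n) * v1 := by
            rw [ENNReal.ofReal_mul (Real.rpow_nonneg (hr1pos k).le _)]
            ring
        _ = (ENNReal.ofReal (R ^ β * (2:ℝ) ^ ((n:ℝ) - β)) * v1) *
            (ENNReal.ofReal ((2:ℝ)^(-β)))^k := by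
            rw [dy_up n k hR, ENNReal.ofReal_mul
                (mul_nonneg (Real.rpow_nonneg hR.le _) (Real.rpow_nonneg (by norm_num) _)),
              ENNReal.ofReal_pow (Real.rpow_nonneg (by norm_num) _)]
            ring
    have hfin : ∫⁻ z in S R, ENNReal.ofReal (‖z‖ ^ (β - (n:ℝ))) ≠ ⊤ := by
      have hbig : ∫⁻ z in S R, ENNReal.ofReal (‖z‖ ^ (β - (n:ℝ)))
          ≤ (ENNReal.ofReal (R ^ β * (2:ℝ) ^ ((n:ℝ) - β)) * v1) *
            (1 - ENNReal.ofReal ((2:ℝ)^(-β)))⁻¹ := by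
        calc ∫⁻ z in S R, ENNReal.ofReal (‖z‖ ^ (β - (n:ℝ)))
            ≤ ∫⁻ z in (⋃ k, A k) ∪ {0}, ENNReal.ofReal (‖z‖ ^ (β - (n:ℝ))) :=
              lintegral_mono_set hcover
          _ ≤ (∫⁻ z in ⋃ k, A k, ENNReal.ofReal (‖z‖ ^ (β - (n:ℝ)))) +
              ∫⁻ z in {(0 : EuclideanSpace ℝ (Fin n))}, ENNReal.ofReal (‖z‖ ^ (β - (n:ℝ))) :=
              lintegral_union_le _ _ _
          _ = ∫⁻ z in ⋃ k, A k, ENNReal.ofReal (‖z‖ ^ (β - (n:ℝ))) := by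
              rw [setLIntegral_measure_zero _ _ (measure_singleton 0), add_zero]
          _ = ∑' k, ∫⁻ z in A k, ENNReal.ofReal (‖z‖ ^ (β - (n:ℝ))) :=
              lintegral_iUnion hAmeas hAdisj _
          _ ≤ ∑' k, (ENNReal.ofReal (R ^ β * (2:ℝ) ^ ((n:ℝ) - β)) * v1) *
              (ENNReal.ofReal ((2:ℝ)^(-β)))^k := ENNReal.tsum_le_tsum hup
          _ = (ENNReal.ofReal (R ^ β * (2:ℝ) ^ ((n:ℝ) - β)) * v1) *
              ∑' k, (ENNReal.ofReal ((2:ℝ)^(-β)))^k := ENNReal.tsum_mul_left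
          _ = (ENNReal.ofReal (R ^ β * (2:ℝ) ^ ((n:ℝ) - β)) * v1) *
              (1 - ENNReal.ofReal ((2:ℝ)^(-β)))⁻¹ := by rw [ENNReal.tsum_geometric]
      refine ne_top_of_le_ne_top ?_ hbig
      have hrlt : ENNReal.ofReal ((2:ℝ)^(-β)) < 1 := by
        rw [show (1:ℝ≥0∞) = ENNReal.ofReal 1 from ENNReal.ofReal_one.symm]
        exact (ENNReal.ofReal_lt_ofReal_iff one_pos).mpr
          (Real.rpow_lt_one_of_one_lt_of_neg one_lt_two (by linarith))
      exact (ENNReal.mul_lt_top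
        (ENNReal.mul_lt_top ENNReal.ofReal_lt_top (lt_top_iff_ne_top.mpr hv1top))
        (ENNReal.inv_lt_top.mpr (tsub_pos_of_lt hrlt))).ne
    exact ⟨hfin, hlow⟩
  · -- thin annulus case : n < β
    have hθhalf : (1/2:ℝ) ≤ 1 - 1/(2*β) := by
      have hβ1 : (1:ℝ) ≤ β := le_trans (by exact_mod_cast hn) hcase.le
      have : 1/(2*β) ≤ 1/2 := by
        apply div_le_div_of_nonneg_left (by norm_num) (by norm_num) (by linarith)
      linarith
    have hθ1 : (1 - 1/(2*β)) ≤ 1 := by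
      have : 0 < 1/(2*β) := by positivity
      linarith
    have hθR0 : 0 < (1 - 1/(2*β)) * R := mul_pos (by linarith) hR
    have hθR1 : (1 - 1/(2*β)) * R ≤ R := mul_le_of_le_one_left hR.le hθ1
    have hpoint : ∀ z ∈ S R \ S ((1 - 1/(2*β)) * R),
        ((1 - 1/(2*β)) * R) ^ (β - (n:ℝ)) ≤ ‖z‖ ^ (β - (n:ℝ)) := by
      intro z hz
      obtain ⟨hz1, _hz2⟩ := hmem_ann hz
      exact Real.rpow_le_rpow hθR0.le hz1 (by linarith)
    have hlbk := hann_lb hθR0 hθR1 hpoint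
    have hd0 : 0 ≤ R^n - ((1 - 1/(2*β)) * R)^n :=
      sub_nonneg.mpr (pow_le_pow_left₀ hθR0.le hθR1 n)
    have hm0 : 0 ≤ ((1 - 1/(2*β)) * R) ^ (β - (n:ℝ)) := Real.rpow_nonneg hθR0.le _
    refine ⟨?_, ?_⟩
    · -- finiteness
      have hpt : ∀ z ∈ S R, ENNReal.ofReal (‖z‖ ^ (β - (n:ℝ)))
          ≤ ENNReal.ofReal (R ^ (β - (n:ℝ))) := fun z hz =>
        ENNReal.ofReal_le_ofReal
          (Real.rpow_le_rpow (norm_nonneg z) (hSmem.mp hz).1.le (by linarith))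
      have hb : ∫⁻ z in S R, ENNReal.ofReal (‖z‖ ^ (β - (n:ℝ)))
          ≤ ENNReal.ofReal (R ^ (β - (n:ℝ))) * volume (S R) := by
        calc ∫⁻ z in S R, ENNReal.ofReal (‖z‖ ^ (β - (n:ℝ)))
            ≤ ∫⁻ _z in S R, ENNReal.ofReal (R ^ (β - (n:ℝ))) :=
              setLIntegral_mono' (hSmeas R) hpt
          _ = _ := setLIntegral_const _ _
      exact ne_top_of_le_ne_top
        (ENNReal.mul_lt_top ENNReal.ofReal_lt_top (lt_top_iff_ne_top.mpr (hSfin R))).ne hb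
    · calc ENNReal.ofReal (c * η₀ ^ (((n : ℝ) - 1)/2) * β⁻¹ * R ^ β)
          ≤ ENNReal.ofReal (((1 - 1/(2*β)) * R) ^ (β - (n:ℝ)) *
              (R^n - ((1 - 1/(2*β)) * R)^n) * Vη) :=
            ENNReal.ofReal_le_ofReal (hfinal _ (thin_low n hR hn hcase))
        _ = ENNReal.ofReal (((1 - 1/(2*β)) * R) ^ (β - (n:ℝ)) *
              (R^n - ((1 - 1/(2*β)) * R)^n)) * ENNReal.ofReal Vη :=
            ENNReal.ofReal_mul (mul_nonneg hm0 hd0)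
        _ ≤ ENNReal.ofReal (((1 - 1/(2*β)) * R) ^ (β - (n:ℝ)) *
              (R^n - ((1 - 1/(2*β)) * R)^n)) * v1 := mul_le_mul_right hcap _
        _ = ENNReal.ofReal (((1 - 1/(2*β)) * R) ^ (β - (n:ℝ))) *
              (ENNReal.ofReal (R^n - ((1 - 1/(2*β)) * R)^n) * v1) := by
            rw [ENNReal.ofReal_mul hm0, mul_assoc]
        _ ≤ ∫⁻ z in S R \ S ((1 - 1/(2*β)) * R), ENNReal.ofReal (‖z‖ ^ (β - (n:ℝ))) := hlbk
        _ ≤ ∫⁻ z in S R, ENNReal.ofReal (‖z‖ ^ (β - (n:ℝ))) := lintegral_mono_set diff_subset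
end

section
/- Let n ≥ 1, p > 2, s ∈ (0,1), and κ ∈ [0, min{sp/(p−2), 1}). Let 1 ≤ ρ₁ < ρ₂ ≤ 2, set ρ̃ = (ρ₂−ρ₁)/4, let m ≥ 3 be an integer, and let m₁, H > 0. Let u : ℝⁿ → ℝ satisfy |u(x) − u(y)| ≤ H|x−y|^κ for all x, y ∈ B_{ρ₂}. Let x̄ ∈ B_{(ρ₁+ρ₂)/2} and ȳ ∈ B_{(3ρ₂+ρ₁)/4} with ā := x̄ − ȳ ≠ 0, and assume: (i) u(x̄+z) − u(ȳ+z) − m₁ψ(x̄+z) ≤ u(x̄) − u(ȳ) − m₁ψ(x̄) for every z ∈ ℝⁿ; (ii) m₁ψ(x̄) ≤ u(x̄) − u(ȳ). Let δ₀ ∈ (0, 1/2), δ = δ₀|ā|, and θ ∈ (0,1) with δ < |ā|^θ < ρ̃. Then there exists a constant C, depending only on n, p, s, κ, H, m and m₁, such that ∫_{B_ρ̃ \ B_δ} [J_p(u(x̄) − u(x̄+z)) − J_p(u(ȳ) − u(ȳ+z))] |z|^{−n−sp} dz ≥ −C [ ∫_δ^{|ā|^θ} r^{κ(p−2)+1−sp}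 dr + |ā|^{κ(m−1)/m} ∫_δ^{|ā|^θ} r^{κ(p−2)−sp} dr + |ā|^{κ + θ(κ(p−2)−sp)} ]. -/
open Metric MeasureTheory
open Set

/-- The localization function `ψ(x) = ((|x|² − ρ₁²)₊)^m`. -/
noncomputable def psiFun (n : ℕ) (ρ₁ : ℝ) (m : ℕ) (x : EuclideanSpace ℝ (Fin n)) : ℝ :=
  (max (‖x‖ ^ 2 - ρ₁ ^ 2) 0) ^ m

lemma hasDerivAt_jp (p : ℝ) (hp : 2 < p) (t : ℝ) :
    HasDerivAt (fun t : ℝ => |t| ^ (p - 2) * t) ((p - 1) * |t| ^ (p - 2)) t := by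
  rcases lt_trichotomy t 0 with ht | rfl | ht
  · rw [abs_of_neg ht]
    have h1 : HasDerivAt (fun t : ℝ => -((-t) ^ (p - 1))) ((p - 1) * (-t) ^ (p - 2)) t := by
      have h2 : HasDerivAt (fun t : ℝ => (-t) ^ (p - 1)) ((p - 1) * (-t) ^ (p - 1 - 1) * (-1)) t :=
        (Real.hasDerivAt_rpow_const (x := -t) (Or.inl (by linarith))).comp t (hasDerivAt_neg t)
      have h3 : HasDerivAt (fun t : ℝ => -((-t) ^ (p - 1))) (-((p - 1) * (-t) ^ (p - 1 - 1) * (-1))) t := h2.neg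
      convert h3 using 1
      ring_nf
    refine h1.congr_of_eventuallyEq ?_
    filter_upwards [eventually_lt_nhds ht] with x hx
    rw [abs_of_neg hx]
    have h4 : (-x) ^ (p - 1) = (-x) ^ (p - 2) * (-x) := by
      rw [← Real.rpow_add_one (by linarith : -x ≠ 0) (p - 2)]
      ring_nf
    rw [h4]; ring
  · have h0 : ((p:ℝ) - 1) * |(0:ℝ)| ^ (p - 2) = 0 := by
      rw [abs_zero, Real.zero_rpow (by linarith)]; ring
    rw [h0]
    rw [hasDerivAt_iff_tendsto_slope]
    have key : ∀ x : ℝ, x ≠ 0 → slope (fun t : ℝ => |t| ^ (p - 2) * t) 0 x = |x| ^ (p - 2) := by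
      intro x hx
      simp [slope_def_field, hx]
    have h5 : Filter.Tendsto (fun x : ℝ => |x| ^ (p - 2)) (nhds 0) (nhds 0) := by
      have : Filter.Tendsto (fun x : ℝ => |x|) (nhds 0) (nhds 0) := by
        simpa using (continuous_abs.tendsto (0:ℝ))
      have h6 := (Real.continuousAt_rpow_const 0 (p - 2) (Or.inr (by linarith))).tendsto
      rw [Real.zero_rpow (by linarith : p - 2 ≠ 0)] at h6
      exact h6.comp this
    refine Filter.Tendsto.congr' ?_ (h5.mono_left nhdsWithin_le_nhds)
    filter_upwards [self_mem_nhdsWithin] with x hx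
    exact (key x hx).symm
  · rw [abs_of_pos ht]
    have h2 : HasDerivAt (fun t : ℝ => t ^ (p - 1)) ((p - 1) * t ^ (p - 1 - 1)) t :=
      Real.hasDerivAt_rpow_const (x := t) (Or.inl (by linarith))
    have h2' : HasDerivAt (fun t : ℝ => t ^ (p - 1)) ((p - 1) * t ^ (p - 2)) t := by
      convert h2 using 2; ring_nf
    refine h2'.congr_of_eventuallyEq ?_
    · filter_upwards [eventually_gt_nhds ht] with x hx
      rw [abs_of_pos hx, ← Real.rpow_add_one (by linarith : x ≠ 0) (p - 2)]
      ring_nf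

lemma jp_lip (p : ℝ) (hp : 2 < p) (a b M : ℝ) (ha : |a| ≤ M) (hb : |b| ≤ M) :
    |Jp p a - Jp p b| ≤ (p - 1) * M ^ (p - 2) * |a - b| := by
  have hM : 0 ≤ M := le_trans (abs_nonneg a) ha
  have key := Convex.norm_image_sub_le_of_norm_hasDerivWithin_le
    (f := fun t : ℝ => |t| ^ (p - 2) * t) (f' := fun t => (p - 1) * |t| ^ (p - 2))
    (s := Set.uIcc a b) (C := (p - 1) * M ^ (p - 2))
    (fun x _ => (hasDerivAt_jp p hp x).hasDerivWithinAt)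
    (fun x hx => by
      have hxM : |x| ≤ M := by
        rcases Set.mem_uIcc.mp hx with h | h
        · exact le_trans (abs_le_max_abs_abs h.1 h.2) (max_le ha hb)
        · exact le_trans (abs_le_max_abs_abs h.1 h.2) (max_le hb ha)
      have : |x| ^ (p - 2) ≤ M ^ (p - 2) :=
        Real.rpow_le_rpow (abs_nonneg x) hxM (by linarith)
      rw [Real.norm_eq_abs, abs_mul, abs_of_nonneg (by linarith : (0:ℝ) ≤ p - 1),
        abs_of_nonneg (Real.rpow_nonneg (abs_nonneg x) _)]
      exact mul_le_mul_of_nonneg_left this (by linarith))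
    (convex_uIcc a b) Set.right_mem_uIcc Set.left_mem_uIcc
  simpa [Jp, Real.norm_eq_abs] using key

lemma jp_mono (p : ℝ) (hp : 2 < p) : Monotone (Jp p) := by
  have hdiff : Differentiable ℝ (Jp p) := fun t => (hasDerivAt_jp p hp t).differentiableAt
  apply monotone_of_deriv_nonneg hdiff
  intro t
  have hd : HasDerivAt (Jp p) ((p - 1) * |t| ^ (p - 2)) t := hasDerivAt_jp p hp t
  rw [hd.deriv]
  have := Real.rpow_nonneg (abs_nonneg t) (p - 2)
  have : (0:ℝ) ≤ p - 1 := by linarith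
  positivity

lemma jp_diff_lower (p : ℝ) (hp : 2 < p) (a b M D : ℝ) (ha : |a| ≤ M) (hb : |b| ≤ M)
    (hD : b - a ≤ D) (hD0 : 0 ≤ D) : -((p - 1) * M ^ (p - 2) * D) ≤ Jp p a - Jp p b := by
  have hM : 0 ≤ M := le_trans (abs_nonneg a) ha
  rcases le_or_gt b a with h | h
  · have h1 : Jp p b ≤ Jp p a := jp_mono p hp h
    have h2 : 0 ≤ (p - 1) * M ^ (p - 2) * D := by
      have h5 := Real.rpow_nonneg hM (p - 2)
      have h6 : (0:ℝ) ≤ p - 1 := by linarith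
      positivity
    linarith
  · have h1 := jp_lip p hp a b M ha hb
    have h2 : Jp p b - Jp p a ≤ (p - 1) * M ^ (p - 2) * |a - b| := by
      have := neg_abs_le (Jp p a - Jp p b); have := abs_le.mp h1; linarith
    have h3 : |a - b| = b - a := by rw [abs_sub_comm]; exact abs_of_pos (by linarith)
    have h4 : (0:ℝ) ≤ (p - 1) * M ^ (p - 2) := by
      have h5 := Real.rpow_nonneg hM (p - 2)
      have h6 : (0:ℝ) ≤ p - 1 := by linarith
      positivity
    nlinarith [mul_le_mul_of_nonneg_left hD h4]

lemma pow_sub_pow_le_aux {x y : ℝ} (hy : 0 ≤ y) (hxy : y ≤ x) (m : ℕ) :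
    x ^ m - y ^ m ≤ m * x ^ (m - 1) * (x - y) := by
  have hx : 0 ≤ x := le_trans hy hxy
  induction m with
  | zero => simp
  | succ k ih =>
    have hyx : y ^ k ≤ x ^ k := pow_le_pow_left₀ hy hxy k
    have h4 : x * ((k:ℝ) * x ^ (k - 1)) ≤ (k:ℝ) * x ^ k := by
      cases k with
      | zero => simp
      | succ j =>
        refine le_of_eq ?_
        simp only [Nat.succ_sub_one]
        rw [show x * ((((j:ℕ)+1:ℕ):ℝ) * x ^ j) = (((j:ℕ)+1:ℕ):ℝ) * (x * x ^ j) by push_cast; ring,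
          ← pow_succ']
    have key : x ^ (k+1) - y ^ (k+1) = x * (x ^ k - y ^ k) + (x - y) * y ^ k := by ring
    have h2 : x * (x ^ k - y ^ k) ≤ x * ((k:ℝ) * x ^ (k - 1) * (x - y)) :=
      mul_le_mul_of_nonneg_left ih hx
    have h3 : x * ((k:ℝ) * x ^ (k - 1) * (x - y)) ≤ (k:ℝ) * x ^ k * (x - y) := by
      have hxy0 : (0:ℝ) ≤ x - y := by linarith
      calc x * ((k:ℝ) * x ^ (k - 1) * (x - y)) = (x * ((k:ℝ) * x ^ (k-1))) * (x - y) := by ring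
      _ ≤ (k:ℝ) * x ^ k * (x - y) := mul_le_mul_of_nonneg_right h4 hxy0
    have h5 : (x - y) * y ^ k ≤ (x - y) * x ^ k := by
      apply mul_le_mul_of_nonneg_left hyx (by linarith)
    have goal_eq : ((((k:ℕ)+1:ℕ)):ℝ) * x ^ ((k+1) - 1) * (x - y)
        = (k:ℝ) * x ^ k * (x - y) + (x - y) * x ^ k := by
      simp only [Nat.add_sub_cancel]; push_cast; ring
    rw [goal_eq]
    linarith

lemma add_pow_le_aux {a b : ℝ} (ha : 0 ≤ a) (hb : 0 ≤ b) (k : ℕ) :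
    (a + b) ^ k ≤ 2 ^ k * (a ^ k + b ^ k) := by
  have h1 : a + b ≤ 2 * max a b := by
    rcases le_total a b with h | h
    · simp [max_eq_right h]; linarith
    · simp [max_eq_left h]; linarith
  calc (a + b) ^ k ≤ (2 * max a b) ^ k := pow_le_pow_left₀ (by linarith) h1 k
  _ = 2 ^ k * (max a b) ^ k := mul_pow 2 _ k
  _ ≤ 2 ^ k * (a ^ k + b ^ k) := by
      apply mul_le_mul_of_nonneg_left _ (by positivity)
      rcases le_total a b with h | h
      · rw [max_eq_right h]; nlinarith [pow_nonneg ha k]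
      · rw [max_eq_left h]; nlinarith [pow_nonneg hb k]

lemma psi_incr (n : ℕ) (ρ₁ : ℝ) (m : ℕ) (hm : 1 ≤ m) (x z : EuclideanSpace ℝ (Fin n))
    (hx : ‖x‖ ≤ 2) (hz : ‖z‖ ≤ 1) :
    psiFun n ρ₁ m (x + z) - psiFun n ρ₁ m x ≤
      (m : ℝ) * 2 ^ (m - 1) * ((max (‖x‖ ^ 2 - ρ₁ ^ 2) 0) ^ (m - 1) * (5 * ‖z‖)
        + (5 * ‖z‖) ^ m) := by
  set α := max (‖x‖ ^ 2 - ρ₁ ^ 2) 0 with hα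
  set β := max (‖x + z‖ ^ 2 - ρ₁ ^ 2) 0 with hβ
  have hα0 : 0 ≤ α := le_max_right _ _
  have hβ0 : 0 ≤ β := le_max_right _ _
  have hz0 : 0 ≤ ‖z‖ := norm_nonneg z
  have hβα : β ≤ α + 5 * ‖z‖ := by
    rw [hβ]
    apply max_le _ (by positivity)
    have h1 : ‖x + z‖ ≤ ‖x‖ + ‖z‖ := norm_add_le x z
    have h2 : ‖x + z‖ ^ 2 ≤ (‖x‖ + ‖z‖) ^ 2 := by
      apply sq_le_sq' _ h1; nlinarith [norm_nonneg (x + z)]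
    have h3 : ‖x + z‖ ^ 2 - ρ₁ ^ 2 ≤ (‖x‖ ^ 2 - ρ₁ ^ 2) + 5 * ‖z‖ := by nlinarith
    have h4 : ‖x‖ ^ 2 - ρ₁ ^ 2 ≤ α := le_max_left _ _
    linarith
  have key : β ^ m - α ^ m ≤ (m : ℝ) * (α + 5 * ‖z‖) ^ (m - 1) * (5 * ‖z‖) := by
    have h5 : β ^ m ≤ (α + 5 * ‖z‖) ^ m := pow_le_pow_left₀ hβ0 hβα m
    have h6 := pow_sub_pow_le_aux hα0 (by linarith : α ≤ α + 5 * ‖z‖) m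
    have h7 : α + 5 * ‖z‖ - α = 5 * ‖z‖ := by ring
    rw [h7] at h6
    linarith
  have h8 : (α + 5 * ‖z‖) ^ (m - 1) ≤ 2 ^ (m - 1) * (α ^ (m - 1) + (5 * ‖z‖) ^ (m - 1)) :=
    add_pow_le_aux hα0 (by positivity) (m - 1)
  have h9 : (5 * ‖z‖) ^ (m - 1) * (5 * ‖z‖) = (5 * ‖z‖) ^ m := by
    rw [← pow_succ]; congr 1; omega
  have h10 : psiFun n ρ₁ m (x + z) - psiFun n ρ₁ m x = β ^ m - α ^ m := rfl
  rw [h10]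
  calc β ^ m - α ^ m ≤ (m : ℝ) * (α + 5 * ‖z‖) ^ (m - 1) * (5 * ‖z‖) := key
  _ ≤ (m : ℝ) * (2 ^ (m - 1) * (α ^ (m - 1) + (5 * ‖z‖) ^ (m - 1))) * (5 * ‖z‖) := by
      apply mul_le_mul_of_nonneg_right _ (by positivity)
      exact mul_le_mul_of_nonneg_left h8 (by positivity)
  _ = (m : ℝ) * 2 ^ (m - 1) * (α ^ (m - 1) * (5 * ‖z‖) + (5 * ‖z‖) ^ (m - 1) * (5 * ‖z‖)) := by
      ring
  _ = (m : ℝ) * 2 ^ (m - 1) * (α ^ (m - 1) * (5 * ‖z‖) + (5 * ‖z‖) ^ m) := by rw [h9]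

lemma annulus_rpow_integral (n : ℕ) (hn : 1 ≤ n) (r₁ r₂ e : ℝ) (h1 : 0 < r₁) (h12 : r₁ ≤ r₂) :
    ∫ z in (ball (0 : EuclideanSpace ℝ (Fin n)) r₂ \ ball 0 r₁), ‖z‖ ^ e
      = ((n : ℝ) * (volume (ball (0 : EuclideanSpace ℝ (Fin n)) 1)).toReal)
        * ∫ r in r₁..r₂, r ^ (e + n - 1) := by
  haveI : Nonempty (Fin n) := ⟨⟨0, hn⟩⟩
  haveI : Nontrivial (EuclideanSpace ℝ (Fin n)) := by
    infer_instance
  set f : ℝ → ℝ := (Set.Ico r₁ r₂).indicator (fun r => r ^ e) with hf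
  have hset : ∀ z : EuclideanSpace ℝ (Fin n),
      (z ∈ ball (0 : EuclideanSpace ℝ (Fin n)) r₂ \ ball 0 r₁ ↔ ‖z‖ ∈ Set.Ico r₁ r₂) := by
    intro z
    simp [mem_ball_zero_iff, Set.mem_Ico, not_lt, and_comm]
  have step1 : ∫ z in (ball (0 : EuclideanSpace ℝ (Fin n)) r₂ \ ball 0 r₁), ‖z‖ ^ e
      = ∫ z : EuclideanSpace ℝ (Fin n), f ‖z‖ := by
    rw [← integral_indicator (measurableSet_ball.diff measurableSet_ball)]
    congr 1
    funext z
    by_cases hz : z ∈ ball (0 : EuclideanSpace ℝ (Fin n)) r₂ \ ball 0 r₁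
    · rw [Set.indicator_of_mem hz, hf, Set.indicator_of_mem ((hset z).mp hz)]
    · rw [Set.indicator_of_notMem hz, hf,
        Set.indicator_of_notMem (fun h => hz ((hset z).mpr h))]
  rw [step1, integral_fun_norm_addHaar volume f]
  have hdim : Module.finrank ℝ (EuclideanSpace ℝ (Fin n)) = n := finrank_euclideanSpace_fin
  rw [hdim]
  have step2 : ∫ y in Set.Ioi (0:ℝ), y ^ (n - 1) • f y
      = ∫ r in r₁..r₂, r ^ (e + n - 1) := by
    have hsub : Set.Ico r₁ r₂ ⊆ Set.Ioi (0:ℝ) := fun y hy => lt_of_lt_of_le h1 hy.1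
    have heq : (fun y : ℝ => y ^ (n - 1) • f y)
        = (Set.Ico r₁ r₂).indicator (fun y => y ^ (n - 1) * y ^ e) := by
      funext y
      by_cases hy : y ∈ Set.Ico r₁ r₂
      · rw [Set.indicator_of_mem hy, hf, smul_eq_mul, Set.indicator_of_mem hy]
      · rw [Set.indicator_of_notMem hy, hf, smul_eq_mul, Set.indicator_of_notMem hy, mul_zero]
    rw [heq, integral_indicator measurableSet_Ico, Measure.restrict_restrict measurableSet_Ico,
      Set.inter_eq_left.mpr hsub]
    have step3 : ∫ y in Set.Ico r₁ r₂, (y ^ (n - 1) * y ^ e)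
        = ∫ y in Set.Ico r₁ r₂, y ^ (e + n - 1) := by
      apply setIntegral_congr_fun measurableSet_Ico
      intro y hy
      have hy0 : 0 < y := lt_of_lt_of_le h1 hy.1
      have : (y : ℝ) ^ (n - 1) = y ^ ((n : ℝ) - 1) := by
        rw [← Real.rpow_natCast y (n - 1)]
        congr 1
        push_cast [Nat.cast_sub hn]
        ring
      show y ^ (n - 1) * y ^ e = y ^ (e + (n:ℝ) - 1)
      rw [this, ← Real.rpow_add hy0]
      congr 1; ring
    rw [step3, setIntegral_congr_set Ico_ae_eq_Ioc, ← intervalIntegral.integral_of_le h12]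
  rw [step2, nsmul_eq_mul, smul_eq_mul]
  rw [measureReal_def]; ring

set_option maxHeartbeats 1000000 in
theorem stmt_10 (n : ℕ) (hn : 1 ≤ n) (p s κ : ℝ) (hp : 2 < p)
    (hs0 : 0 < s) (hs1 : s < 1)
    (hκ0 : 0 ≤ κ) (hκ1 : κ < min (s * p / (p - 2)) 1)
    (m : ℕ) (hm : 3 ≤ m) (m₁ H : ℝ) (hm₁ : 0 < m₁) (hH : 0 < H) :
    ∃ C : ℝ, 0 < C ∧
      ∀ ρ₁ ρ₂ : ℝ, 1 ≤ ρ₁ → ρ₁ < ρ₂ → ρ₂ ≤ 2 →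
      ∀ u : EuclideanSpace ℝ (Fin n) → ℝ,
        (∀ x ∈ ball (0 : EuclideanSpace ℝ (Fin n)) ρ₂,
          ∀ y ∈ ball (0 : EuclideanSpace ℝ (Fin n)) ρ₂,
            |u x - u y| ≤ H * ‖x - y‖ ^ κ) →
      ∀ xb ∈ ball (0 : EuclideanSpace ℝ (Fin n)) ((ρ₁ + ρ₂) / 2),
      ∀ yb ∈ ball (0 : EuclideanSpace ℝ (Fin n)) ((3 * ρ₂ + ρ₁) / 4),
        xb - yb ≠ 0 →
        (∀ z : EuclideanSpace ℝ (Fin n),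
          u (xb + z) - u (yb + z) - m₁ * psiFun n ρ₁ m (xb + z)
            ≤ u xb - u yb - m₁ * psiFun n ρ₁ m xb) →
        m₁ * psiFun n ρ₁ m xb ≤ u xb - u yb →
      ∀ δ₀ θ : ℝ, 0 < δ₀ → δ₀ < 1 / 2 → 0 < θ → θ < 1 →
        δ₀ * ‖xb - yb‖ < ‖xb - yb‖ ^ θ → ‖xb - yb‖ ^ θ < (ρ₂ - ρ₁) / 4 →
        -C * ((∫ r in (δ₀ * ‖xb - yb‖)..(‖xb - yb‖ ^ θ), r ^ (κ * (p - 2) + 1 - s * p))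
            + ‖xb - yb‖ ^ (κ * ((m : ℝ) - 1) / m)
              * (∫ r in (δ₀ * ‖xb - yb‖)..(‖xb - yb‖ ^ θ), r ^ (κ * (p - 2) - s * p))
            + ‖xb - yb‖ ^ (κ + θ * (κ * (p - 2) - s * p)))
          ≤ ∫ z in (ball (0 : EuclideanSpace ℝ (Fin n)) ((ρ₂ - ρ₁) / 4)
                \ ball 0 (δ₀ * ‖xb - yb‖)),
              (Jp p (u xb - u (xb + z)) - Jp p (u yb - u (yb + z)))
                * ‖z‖ ^ (-(n : ℝ) - s * p) := by
  have hp2 : (0:ℝ) < p - 2 := by linarith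
  have hκsp : κ * (p - 2) < s * p := by
    have h1 : κ < s * p / (p - 2) := lt_of_lt_of_le hκ1 (min_le_left _ _)
    calc κ * (p - 2) < (s * p / (p - 2)) * (p - 2) := by
          exact mul_lt_mul_of_pos_right h1 hp2
    _ = s * p := by field_simp
  set ω : ℝ := (n : ℝ) * (volume (ball (0 : EuclideanSpace ℝ (Fin n)) 1)).toReal with hωdef
  have hω0 : 0 ≤ ω := by positivity
  set Q : ℝ := (H / m₁) ^ (((m:ℝ) - 1) / m) with hQdef
  have hQ0 : 0 ≤ Q := Real.rpow_nonneg (by positivity) _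
  have hHp2 : (0:ℝ) ≤ H ^ (p - 2) := Real.rpow_nonneg hH.le _
  have hHp1 : (0:ℝ) ≤ H ^ (p - 1) := Real.rpow_nonneg hH.le _
  set c₁ : ℝ := (p - 1) * H ^ (p - 2) * m₁ * ((m : ℝ) * 2 ^ (m - 1) * 5) * Q with hc₁def
  set c₂ : ℝ := (p - 1) * H ^ (p - 2) * m₁ * ((m : ℝ) * 2 ^ (m - 1) * 5 ^ m) with hc₂def
  set K₂ : ℝ := 2 * (p - 1) * H ^ (p - 1) with hK₂def
  set e : ℝ := κ * (p - 2) - s * p with hedef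
  have he : e < 0 := by simp only [hedef]; linarith
  have hc₁0 : 0 ≤ c₁ := by
    have : (0:ℝ) ≤ p - 1 := by linarith
    positivity
  have hc₂0 : 0 ≤ c₂ := by
    have : (0:ℝ) ≤ p - 1 := by linarith
    positivity
  have hK₂0 : 0 ≤ K₂ := by
    have : (0:ℝ) ≤ p - 1 := by linarith
    positivity
  set C : ℝ := ω * (c₁ + c₂ + K₂ / (-e)) + 1 with hCdef
  have hC0 : 0 < C := by
    have h1 : 0 ≤ K₂ / (-e) := div_nonneg hK₂0 (by linarith)
    have h2 : 0 ≤ ω * (c₁ + c₂ + K₂ / (-e)) := by positivity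
    rw [hCdef]; linarith
  refine ⟨C, hC0, ?_⟩
  intro ρ₁ ρ₂ hρ₁ hρ₁₂ hρ₂ u hu xb hxb yb hyb hab hyp1 hyp2 δ₀ θ hδ₀ hδ₀half hθ0 hθ1 hδR hRρ
  have hA0 : 0 < ‖xb - yb‖ := norm_pos_iff.mpr hab
  set A : ℝ := ‖xb - yb‖ with hAdef
  set ρt : ℝ := (ρ₂ - ρ₁) / 4 with hρtdef
  set δ' : ℝ := δ₀ * A with hδ'def
  set R : ℝ := A ^ θ with hRdef
  have hδ'0 : 0 < δ' := mul_pos hδ₀ hA0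
  have hρt14 : ρt ≤ 1 / 4 := by rw [hρtdef]; linarith
  have hR0 : 0 < R := Real.rpow_pos_of_pos hA0 θ
  have hρt0 : 0 < ρt := lt_trans hR0 hRρ
  have hA1 : A < 1 := by
    by_contra h
    push_neg at h
    have h1 : (1:ℝ) ^ θ ≤ A ^ θ := Real.rpow_le_rpow (by norm_num) h hθ0.le
    rw [Real.one_rpow] at h1
    have : R < 1 / 4 := lt_of_lt_of_le hRρ hρt14
    rw [hRdef] at this
    linarith
  have hR1 : R ≤ 1 := by linarith
  have hxbn : ‖xb‖ < (ρ₁ + ρ₂) / 2 := mem_ball_zero_iff.mp hxb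
  have hybn : ‖yb‖ < (3 * ρ₂ + ρ₁) / 4 := mem_ball_zero_iff.mp hyb
  have hxbB : xb ∈ ball (0 : EuclideanSpace ℝ (Fin n)) ρ₂ := mem_ball_zero_iff.mpr (by linarith)
  have hybB : yb ∈ ball (0 : EuclideanSpace ℝ (Fin n)) ρ₂ := mem_ball_zero_iff.mpr (by linarith)
  have hxb2 : ‖xb‖ ≤ 2 := by linarith
  set Sin : Set (EuclideanSpace ℝ (Fin n)) := ball 0 R \ ball 0 δ' with hSindef
  set Sout : Set (EuclideanSpace ℝ (Fin n)) := ball 0 ρt \ ball 0 R with hSoutdef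
  set S : Set (EuclideanSpace ℝ (Fin n)) := ball 0 ρt \ ball 0 δ' with hSdef
  have hSin_m : MeasurableSet Sin := measurableSet_ball.diff measurableSet_ball
  have hSout_m : MeasurableSet Sout := measurableSet_ball.diff measurableSet_ball
  have hSsplit : S = Sin ∪ Sout := by
    rw [hSdef, hSindef, hSoutdef]
    ext z
    simp only [Set.mem_diff, mem_ball_zero_iff, Set.mem_union]
    constructor
    · rintro ⟨h1, h2⟩
      by_cases h3 : ‖z‖ < R
      · exact Or.inl ⟨h3, h2⟩
      · exact Or.inr ⟨h1, h3⟩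
    · rintro (⟨h1, h2⟩ | ⟨h1, h2⟩)
      · exact ⟨lt_trans h1 hRρ, h2⟩
      · push_neg at h2
        exact ⟨h1, fun hc => absurd (lt_of_lt_of_le hc (le_trans hδR.le h2)) (lt_irrefl _)⟩
  have hdisj : Disjoint Sin Sout := by
    rw [Set.disjoint_left]
    rintro z ⟨hz1, _⟩ ⟨_, hz2⟩
    exact hz2 hz1
  set F : EuclideanSpace ℝ (Fin n) → ℝ :=
    fun z => (Jp p (u xb - u (xb + z)) - Jp p (u yb - u (yb + z))) * ‖z‖ ^ (-(n : ℝ) - s * p)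
    with hFdef
  set T₁ : ℝ := ∫ r in δ'..R, r ^ (κ * (p - 2) + 1 - s * p) with hT₁def
  set T₂ : ℝ := ∫ r in δ'..R, r ^ (κ * (p - 2) - s * p) with hT₂def
  have hT₁0 : 0 ≤ T₁ := by
    rw [hT₁def]
    apply intervalIntegral.integral_nonneg hδR.le
    exact fun r hr => Real.rpow_nonneg (le_trans hδ'0.le hr.1) _
  have hT₂0 : 0 ≤ T₂ := by
    rw [hT₂def]
    apply intervalIntegral.integral_nonneg hδR.le
    exact fun r hr => Real.rpow_nonneg (le_trans hδ'0.le hr.1) _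
  have hT₃0 : 0 ≤ A ^ (κ + θ * e) := Real.rpow_nonneg hA0.le _
  have hAq0 : 0 ≤ A ^ (κ * ((m:ℝ) - 1) / m) := Real.rpow_nonneg hA0.le _
  show -C * (T₁ + A ^ (κ * ((m:ℝ) - 1) / m) * T₂ + A ^ (κ + θ * e)) ≤ ∫ z in S, F z
  by_cases hI : IntegrableOn F S volume
  · have hSinS : Sin ⊆ S := by
      rw [hSindef, hSdef]
      exact Set.diff_subset_diff_left (ball_subset_ball hRρ.le)
    have hSoutS : Sout ⊆ S := by
      rw [hSoutdef, hSdef]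
      apply Set.diff_subset_diff_right (ball_subset_ball hδR.le)
    have hIin : IntegrableOn F Sin volume := hI.mono_set hSinS
    have hIout : IntegrableOn F Sout volume := hI.mono_set hSoutS
    have hsplitInt : ∫ z in S, F z = (∫ z in Sin, F z) + ∫ z in Sout, F z := by
      rw [hSsplit]
      exact setIntegral_union hdisj hSout_m (hI.mono_set hSinS) (hI.mono_set hSoutS)
    set e₁ : ℝ := κ * (p - 2) + 1 + (-(n : ℝ) - s * p) with he₁def
    set e₂ : ℝ := κ * (p - 2) + (m : ℝ) + (-(n : ℝ) - s * p) with he₂def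
    set e₃ : ℝ := κ * (p - 2) + (-(n : ℝ) - s * p) with he₃def
    have hrint : ∀ t₁ t₂ q : ℝ, 0 < t₁ →
        IntegrableOn (fun z : EuclideanSpace ℝ (Fin n) => ‖z‖ ^ q)
          (ball 0 t₂ \ ball 0 t₁) volume := by
      intro t₁ t₂ q ht₁
      have hcomp : IsCompact (closedBall (0 : EuclideanSpace ℝ (Fin n)) t₂ \ ball 0 t₁) :=
        (isCompact_closedBall 0 t₂).diff isOpen_ball
      have hcont : ContinuousOn (fun z : EuclideanSpace ℝ (Fin n) => ‖z‖ ^ q)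
          (closedBall (0 : EuclideanSpace ℝ (Fin n)) t₂ \ ball 0 t₁) := by
        intro z hz
        have hz1 : ¬ ‖z‖ < t₁ := by
          have := hz.2
          rwa [mem_ball_zero_iff] at this
        push_neg at hz1
        have hzne : ‖z‖ ≠ 0 := ne_of_gt (lt_of_lt_of_le ht₁ hz1)
        exact ((Real.continuousAt_rpow_const _ _ (Or.inl hzne)).comp
          continuous_norm.continuousAt).continuousWithinAt
      exact (hcont.integrableOn_compact hcomp).mono_set
        (Set.diff_subset_diff_left ball_subset_closedBall)
    have hint1 : IntegrableOn (fun z : EuclideanSpace ℝ (Fin n) =>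
        c₁ * A ^ (κ * ((m:ℝ) - 1) / m) * ‖z‖ ^ e₁) Sin volume :=
      (hrint δ' R e₁ hδ'0).const_mul _
    have hint2 : IntegrableOn (fun z : EuclideanSpace ℝ (Fin n) =>
        c₂ * ‖z‖ ^ e₂) Sin volume := (hrint δ' R e₂ hδ'0).const_mul _
    have hint3 : IntegrableOn (fun z : EuclideanSpace ℝ (Fin n) =>
        K₂ * A ^ κ * ‖z‖ ^ e₃) Sout volume := (hrint R ρt e₃ hR0).const_mul _
    have P1 : ∀ z ∈ Sin, -(c₁ * A ^ (κ * ((m:ℝ) - 1) / m) * ‖z‖ ^ e₁ + c₂ * ‖z‖ ^ e₂) ≤ F z := by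
      intro z hz
      obtain ⟨hza, hzb⟩ := hz
      rw [mem_ball_zero_iff] at hza
      have hzδ : δ' ≤ ‖z‖ := not_lt.mp (fun h => hzb (mem_ball_zero_iff.mpr h))
      have hz0 : 0 < ‖z‖ := lt_of_lt_of_le hδ'0 hzδ
      have hzρ : ‖z‖ < ρt := lt_trans hza hRρ
      have hz1 : ‖z‖ ≤ 1 := by linarith
      have hxz : xb + z ∈ ball (0 : EuclideanSpace ℝ (Fin n)) ρ₂ := by
        rw [mem_ball_zero_iff]
        calc ‖xb + z‖ ≤ ‖xb‖ + ‖z‖ := norm_add_le _ _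
        _ < ρ₂ := by rw [hρtdef] at hzρ; linarith
      have hyz : yb + z ∈ ball (0 : EuclideanSpace ℝ (Fin n)) ρ₂ := by
        rw [mem_ball_zero_iff]
        calc ‖yb + z‖ ≤ ‖yb‖ + ‖z‖ := norm_add_le _ _
        _ < ρ₂ := by rw [hρtdef] at hzρ; linarith
      have ha : |u xb - u (xb + z)| ≤ H * ‖z‖ ^ κ := by
        have h := hu xb hxbB (xb + z) hxz
        have heq : xb - (xb + z) = -z := by abel
        rwa [heq, norm_neg] at h
      have hb : |u yb - u (yb + z)| ≤ H * ‖z‖ ^ κ := by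
        have h := hu yb hybB (yb + z) hyz
        have heq : yb - (yb + z) = -z := by abel
        rwa [heq, norm_neg] at h
      have habA : |u xb - u yb| ≤ H * A ^ κ := by
        have h := hu xb hxbB yb hybB
        rwa [← hAdef] at h
      set α : ℝ := max (‖xb‖ ^ 2 - ρ₁ ^ 2) 0 with hαdef
      have hα0 : 0 ≤ α := le_max_right _ _
      have hψ := psi_incr n ρ₁ m (by omega) xb z hxb2 hz1
      have h1m : 1 ≤ m := by omega
      have hm3 : (3:ℝ) ≤ (m:ℝ) := by exact_mod_cast hm
      have hψxb : α ^ m ≤ (H / m₁) * A ^ κ := by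
        have h1 : m₁ * psiFun n ρ₁ m xb ≤ H * A ^ κ :=
          le_trans hyp2 (le_trans (le_abs_self _) habA)
        have h2 : psiFun n ρ₁ m xb = α ^ m := rfl
        rw [h2] at h1
        rw [div_mul_eq_mul_div, le_div_iff₀ hm₁]
        linarith
      have hαq : α ^ (m - 1) ≤ Q * A ^ (κ * ((m:ℝ) - 1) / m) := by
        have hcast : α ^ (m - 1) = α ^ ((m:ℝ) - 1) := by
          rw [← Real.rpow_natCast α (m - 1), Nat.cast_sub h1m, Nat.cast_one]
        have hq0 : (0:ℝ) ≤ ((m:ℝ) - 1) / m := div_nonneg (by linarith) (by linarith)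
        have hmq : (m:ℝ) * (((m:ℝ) - 1) / m) = (m:ℝ) - 1 := by
          field_simp
        have hK0 : 0 ≤ (H / m₁) * A ^ κ :=
          mul_nonneg (by positivity) (Real.rpow_nonneg hA0.le κ)
        have key : α ^ ((m:ℝ) - 1) ≤ ((H / m₁) * A ^ κ) ^ (((m:ℝ) - 1) / m) := by
          conv_lhs => rw [← hmq, Real.rpow_mul hα0]
          apply Real.rpow_le_rpow (Real.rpow_nonneg hα0 _) _ hq0
          rw [Real.rpow_natCast]
          exact hψxb
        have hexp : ((H / m₁) * A ^ κ) ^ (((m:ℝ) - 1) / m)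
            = Q * A ^ (κ * ((m:ℝ) - 1) / m) := by
          rw [Real.mul_rpow (by positivity) (Real.rpow_nonneg hA0.le κ),
            ← Real.rpow_mul hA0.le, hQdef,
            show κ * (((m:ℝ) - 1) / m) = κ * ((m:ℝ) - 1) / m from by ring]
        rw [hcast, ← hexp]
        exact key
      set D : ℝ := m₁ * ((m:ℝ) * 2 ^ (m - 1)
        * (Q * A ^ (κ * ((m:ℝ) - 1) / m) * (5 * ‖z‖) + (5 * ‖z‖) ^ m)) with hDdef
      have hQA0 : 0 ≤ Q * A ^ (κ * ((m:ℝ) - 1) / m) := mul_nonneg hQ0 (Real.rpow_nonneg hA0.le _)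
      have hD0 : 0 ≤ D := by
        rw [hDdef]
        apply mul_nonneg hm₁.le
        apply mul_nonneg (by positivity)
        apply add_nonneg
        · exact mul_nonneg hQA0 (by positivity)
        · positivity
      have hba2 : (u yb - u (yb + z)) - (u xb - u (xb + z)) ≤ D := by
        have h3 := hyp1 z
        have h4 : psiFun n ρ₁ m (xb + z) - psiFun n ρ₁ m xb
            ≤ (m:ℝ) * 2 ^ (m - 1) * (α ^ (m - 1) * (5 * ‖z‖) + (5 * ‖z‖) ^ m) := hψ
        have h5 : α ^ (m - 1) * (5 * ‖z‖) ≤ Q * A ^ (κ * ((m:ℝ) - 1) / m) * (5 * ‖z‖) :=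
          mul_le_mul_of_nonneg_right hαq (by positivity)
        have h6 : psiFun n ρ₁ m (xb + z) - psiFun n ρ₁ m xb
            ≤ (m:ℝ) * 2 ^ (m - 1) * (Q * A ^ (κ * ((m:ℝ) - 1) / m) * (5 * ‖z‖) + (5 * ‖z‖) ^ m) := by
          refine le_trans h4 (mul_le_mul_of_nonneg_left (by linarith) (by positivity))
        have h7 := mul_le_mul_of_nonneg_left h6 hm₁.le
        rw [hDdef]
        linarith
      have hjp := jp_diff_lower p hp (u xb - u (xb + z)) (u yb - u (yb + z))
        (H * ‖z‖ ^ κ) D ha hb hba2 hD0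
      have hw0 : 0 ≤ ‖z‖ ^ (-(n:ℝ) - s * p) := Real.rpow_nonneg (norm_nonneg z) _
      have hmul := mul_le_mul_of_nonneg_right hjp hw0
      have hM : (H * ‖z‖ ^ κ) ^ (p - 2) = H ^ (p - 2) * ‖z‖ ^ (κ * (p - 2)) := by
        rw [Real.mul_rpow hH.le (Real.rpow_nonneg (norm_nonneg z) κ),
          ← Real.rpow_mul (norm_nonneg z)]
      have hz1e : ‖z‖ ^ (κ * (p - 2)) * ‖z‖ * ‖z‖ ^ (-(n:ℝ) - s * p) = ‖z‖ ^ e₁ := by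
        calc ‖z‖ ^ (κ * (p - 2)) * ‖z‖ * ‖z‖ ^ (-(n:ℝ) - s * p)
            = ‖z‖ ^ (κ * (p - 2)) * ‖z‖ ^ (1:ℝ) * ‖z‖ ^ (-(n:ℝ) - s * p) := by
              rw [Real.rpow_one]
        _ = ‖z‖ ^ (κ * (p - 2) + 1 + (-(n:ℝ) - s * p)) := by
              rw [← Real.rpow_add hz0, ← Real.rpow_add hz0]
        _ = ‖z‖ ^ e₁ := by rw [he₁def]
      have hz2e : ‖z‖ ^ (κ * (p - 2)) * ‖z‖ ^ m * ‖z‖ ^ (-(n:ℝ) - s * p) = ‖z‖ ^ e₂ := by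
        calc ‖z‖ ^ (κ * (p - 2)) * ‖z‖ ^ m * ‖z‖ ^ (-(n:ℝ) - s * p)
            = ‖z‖ ^ (κ * (p - 2)) * ‖z‖ ^ ((m:ℝ)) * ‖z‖ ^ (-(n:ℝ) - s * p) := by
              rw [Real.rpow_natCast]
        _ = ‖z‖ ^ (κ * (p - 2) + (m:ℝ) + (-(n:ℝ) - s * p)) := by
              rw [← Real.rpow_add hz0, ← Real.rpow_add hz0]
        _ = ‖z‖ ^ e₂ := by rw [he₂def]
      have h5m : (5 * ‖z‖) ^ m = 5 ^ m * ‖z‖ ^ m := mul_pow _ _ _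
      have key : (p - 1) * (H * ‖z‖ ^ κ) ^ (p - 2) * D * ‖z‖ ^ (-(n:ℝ) - s * p)
          = c₁ * A ^ (κ * ((m:ℝ) - 1) / m) * ‖z‖ ^ e₁ + c₂ * ‖z‖ ^ e₂ := by
        rw [hM, hDdef, hc₁def, hc₂def, h5m, ← hz1e, ← hz2e]
        ring
      show -(c₁ * A ^ (κ * ((m:ℝ) - 1) / m) * ‖z‖ ^ e₁ + c₂ * ‖z‖ ^ e₂)
        ≤ (Jp p (u xb - u (xb + z)) - Jp p (u yb - u (yb + z))) * ‖z‖ ^ (-(n:ℝ) - s * p)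
      linarith [hmul, key]
    have P2 : ∀ z ∈ Sout, -(K₂ * A ^ κ * ‖z‖ ^ e₃) ≤ F z := by
      intro z hz
      obtain ⟨hza, hzb⟩ := hz
      rw [mem_ball_zero_iff] at hza
      have hzR : R ≤ ‖z‖ := not_lt.mp (fun h => hzb (mem_ball_zero_iff.mpr h))
      have hz0 : 0 < ‖z‖ := lt_of_lt_of_le hR0 hzR
      have hzρ : ‖z‖ < ρt := hza
      have hxz : xb + z ∈ ball (0 : EuclideanSpace ℝ (Fin n)) ρ₂ := by
        rw [mem_ball_zero_iff]
        calc ‖xb + z‖ ≤ ‖xb‖ + ‖z‖ := norm_add_le _ _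
        _ < ρ₂ := by rw [hρtdef] at hzρ; linarith
      have hyz : yb + z ∈ ball (0 : EuclideanSpace ℝ (Fin n)) ρ₂ := by
        rw [mem_ball_zero_iff]
        calc ‖yb + z‖ ≤ ‖yb‖ + ‖z‖ := norm_add_le _ _
        _ < ρ₂ := by rw [hρtdef] at hzρ; linarith
      have ha : |u xb - u (xb + z)| ≤ H * ‖z‖ ^ κ := by
        have h := hu xb hxbB (xb + z) hxz
        have heq : xb - (xb + z) = -z := by abel
        rwa [heq, norm_neg] at h
      have hb : |u yb - u (yb + z)| ≤ H * ‖z‖ ^ κ := by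
        have h := hu yb hybB (yb + z) hyz
        have heq : yb - (yb + z) = -z := by abel
        rwa [heq, norm_neg] at h
      have habA : |u xb - u yb| ≤ H * A ^ κ := by
        have h := hu xb hxbB yb hybB
        rwa [← hAdef] at h
      have habz : |u (xb + z) - u (yb + z)| ≤ H * A ^ κ := by
        have h := hu (xb + z) hxz (yb + z) hyz
        have heq : (xb + z) - (yb + z) = xb - yb := by abel
        rwa [heq, ← hAdef] at h
      have hAκ0' : 0 ≤ A ^ κ := Real.rpow_nonneg hA0.le κ
      have hba2 : (u yb - u (yb + z)) - (u xb - u (xb + z)) ≤ 2 * (H * A ^ κ) := by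
        have h1 := abs_le.mp habA
        have h2 := abs_le.mp habz
        linarith [h1.1, h1.2, h2.1, h2.2]
      have hD0 : (0:ℝ) ≤ 2 * (H * A ^ κ) := by
        have := mul_nonneg hH.le hAκ0'
        linarith
      have hjp := jp_diff_lower p hp (u xb - u (xb + z)) (u yb - u (yb + z))
        (H * ‖z‖ ^ κ) (2 * (H * A ^ κ)) ha hb hba2 hD0
      have hw0 : 0 ≤ ‖z‖ ^ (-(n:ℝ) - s * p) := Real.rpow_nonneg (norm_nonneg z) _
      have hmul := mul_le_mul_of_nonneg_right hjp hw0
      have hM : (H * ‖z‖ ^ κ) ^ (p - 2) = H ^ (p - 2) * ‖z‖ ^ (κ * (p - 2)) := by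
        rw [Real.mul_rpow hH.le (Real.rpow_nonneg (norm_nonneg z) κ),
          ← Real.rpow_mul (norm_nonneg z)]
      have hz3e : ‖z‖ ^ (κ * (p - 2)) * ‖z‖ ^ (-(n:ℝ) - s * p) = ‖z‖ ^ e₃ := by
        rw [← Real.rpow_add hz0, he₃def]
      have hHH : H ^ (p - 2) * H = H ^ (p - 1) := by
        rw [← Real.rpow_add_one hH.ne' (p - 2),
          show p - 2 + 1 = p - 1 from by ring]
      have key : (p - 1) * (H * ‖z‖ ^ κ) ^ (p - 2) * (2 * (H * A ^ κ))
            * ‖z‖ ^ (-(n:ℝ) - s * p) = K₂ * A ^ κ * ‖z‖ ^ e₃ := by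
        rw [hM, hK₂def, ← hHH, ← hz3e]
        ring
      show -(K₂ * A ^ κ * ‖z‖ ^ e₃)
        ≤ (Jp p (u xb - u (xb + z)) - Jp p (u yb - u (yb + z))) * ‖z‖ ^ (-(n:ℝ) - s * p)
      linarith [hmul, key]
    have hlow1 : -((∫ z in Sin, c₁ * A ^ (κ * ((m:ℝ) - 1) / m) * ‖z‖ ^ e₁)
        + ∫ z in Sin, c₂ * ‖z‖ ^ e₂) ≤ ∫ z in Sin, F z := by
      have hgint : IntegrableOn (fun z : EuclideanSpace ℝ (Fin n) =>
          c₁ * A ^ (κ * ((m:ℝ) - 1) / m) * ‖z‖ ^ e₁ + c₂ * ‖z‖ ^ e₂) Sin volume :=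
        hint1.add hint2
      have h1 := setIntegral_mono_on (f := fun z : EuclideanSpace ℝ (Fin n) =>
          -(c₁ * A ^ (κ * ((m:ℝ) - 1) / m) * ‖z‖ ^ e₁ + c₂ * ‖z‖ ^ e₂)) hgint.neg hIin hSin_m P1
      rw [integral_neg, integral_add hint1 hint2] at h1
      exact h1
    have hlow2 : -(∫ z in Sout, K₂ * A ^ κ * ‖z‖ ^ e₃) ≤ ∫ z in Sout, F z := by
      have h2 := setIntegral_mono_on (f := fun z : EuclideanSpace ℝ (Fin n) =>
          -(K₂ * A ^ κ * ‖z‖ ^ e₃)) hint3.neg hIout hSout_m P2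
      rw [integral_neg] at h2
      exact h2
    -- compute the bounding integrals
    have hJ1 : ∫ z in Sin, c₁ * A ^ (κ * ((m:ℝ) - 1) / m) * ‖z‖ ^ e₁
        = c₁ * A ^ (κ * ((m:ℝ) - 1) / m) * (ω * T₂) := by
      rw [MeasureTheory.integral_const_mul, hSindef, annulus_rpow_integral n hn δ' R e₁ hδ'0 hδR.le]
      rw [show e₁ + (n:ℝ) - 1 = κ * (p - 2) - s * p by rw [he₁def]; ring, ← hT₂def]
    have hJ2 : ∫ z in Sin, c₂ * ‖z‖ ^ e₂
        = c₂ * (ω * ∫ r in δ'..R, r ^ (κ * (p - 2) + (m:ℝ) - 1 - s * p)) := by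
      rw [MeasureTheory.integral_const_mul, hSindef, annulus_rpow_integral n hn δ' R e₂ hδ'0 hδR.le]
      rw [show e₂ + (n:ℝ) - 1 = κ * (p - 2) + (m:ℝ) - 1 - s * p by rw [he₂def]; ring]
    have hrii : ∀ q : ℝ, IntervalIntegrable (fun r : ℝ => r ^ q) volume δ' R := by
      intro q
      apply ContinuousOn.intervalIntegrable
      intro r hr
      rw [Set.uIcc_of_le hδR.le] at hr
      have hr0 : r ≠ 0 := ne_of_gt (lt_of_lt_of_le hδ'0 hr.1)
      exact (Real.continuousAt_rpow_const _ _ (Or.inl hr0)).continuousWithinAt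
    have hJ2le : (∫ r in δ'..R, r ^ (κ * (p - 2) + (m:ℝ) - 1 - s * p)) ≤ T₁ := by
      rw [hT₁def]
      apply intervalIntegral.integral_mono_on hδR.le (hrii _) (hrii _)
      intro r hr
      have hr0 : 0 < r := lt_of_lt_of_le hδ'0 hr.1
      have hr1 : r ≤ 1 := le_trans hr.2 hR1
      apply Real.rpow_le_rpow_of_exponent_ge hr0 hr1
      have hm3 : (3:ℝ) ≤ (m:ℝ) := by exact_mod_cast hm
      linarith
    have hJ3 : ∫ z in Sout, K₂ * A ^ κ * ‖z‖ ^ e₃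
        = K₂ * A ^ κ * (ω * ((ρt ^ e - R ^ e) / e)) := by
      rw [MeasureTheory.integral_const_mul, hSoutdef, annulus_rpow_integral n hn R ρt e₃ hR0 hRρ.le]
      congr 1
      rw [show e₃ + (n:ℝ) - 1 = e - 1 by rw [he₃def, hedef]; ring]
      congr 1
      rw [integral_rpow (Or.inr ⟨by linarith, Set.notMem_uIcc_of_lt hR0 hρt0⟩)]
      rw [show e - 1 + 1 = e by ring]
    have hJ3le : (ρt ^ e - R ^ e) / e ≤ A ^ (θ * e) / (-e) := by
      have hX : 0 ≤ ρt ^ e := Real.rpow_nonneg hρt0.le _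
      have hRe : R ^ e = A ^ (θ * e) := by rw [hRdef, ← Real.rpow_mul hA0.le]
      have h9 : (ρt ^ e - A ^ (θ * e)) / e = (A ^ (θ * e) - ρt ^ e) / (-e) := by
        rw [div_neg, ← neg_div]
        congr 1
        ring
      rw [hRe, h9]
      gcongr
      · linarith
      · linarith
    -- final assembly
    have hT₁'0 : 0 ≤ ∫ r in δ'..R, r ^ (κ * (p - 2) + (m:ℝ) - 1 - s * p) := by
      apply intervalIntegral.integral_nonneg hδR.le
      exact fun r hr => Real.rpow_nonneg (le_trans hδ'0.le hr.1) _
    have hAκ0 : 0 ≤ A ^ κ := Real.rpow_nonneg hA0.le _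
    have hAe : A ^ κ * A ^ (θ * e) = A ^ (κ + θ * e) := (Real.rpow_add hA0 κ (θ * e)).symm
    have hk0 : 0 ≤ K₂ / (-e) := div_nonneg hK₂0 (by linarith)
    have hsum : ∀ x : ℝ, 0 ≤ x → x ≤ c₁ + c₂ + K₂ / (-e) → x * ω ≤ C := by
      intro x hx hxs
      rw [hCdef]
      have h3 := mul_le_mul_of_nonneg_left hxs hω0
      linarith
    have hCc₁ : c₁ * ω ≤ C := hsum c₁ hc₁0 (by linarith)
    have hCc₂ : c₂ * ω ≤ C := hsum c₂ hc₂0 (by linarith)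
    have hCk : (K₂ / (-e)) * ω ≤ C := hsum _ hk0 (by linarith)
    have hP1 : c₁ * A ^ (κ * ((m:ℝ) - 1) / m) * (ω * T₂)
        ≤ C * (A ^ (κ * ((m:ℝ) - 1) / m) * T₂) := by
      rw [show c₁ * A ^ (κ * ((m:ℝ) - 1) / m) * (ω * T₂)
          = (c₁ * ω) * (A ^ (κ * ((m:ℝ) - 1) / m) * T₂) from by ring]
      exact mul_le_mul_of_nonneg_right hCc₁ (mul_nonneg hAq0 hT₂0)
    have hP2 : c₂ * (ω * ∫ r in δ'..R, r ^ (κ * (p - 2) + (m:ℝ) - 1 - s * p)) ≤ C * T₁ := by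
      rw [show c₂ * (ω * ∫ r in δ'..R, r ^ (κ * (p - 2) + (m:ℝ) - 1 - s * p))
          = (c₂ * ω) * ∫ r in δ'..R, r ^ (κ * (p - 2) + (m:ℝ) - 1 - s * p) from by ring]
      calc (c₂ * ω) * ∫ r in δ'..R, r ^ (κ * (p - 2) + (m:ℝ) - 1 - s * p)
          ≤ (c₂ * ω) * T₁ := mul_le_mul_of_nonneg_left hJ2le (mul_nonneg hc₂0 hω0)
      _ ≤ C * T₁ := mul_le_mul_of_nonneg_right hCc₂ hT₁0
    have hP3 : K₂ * A ^ κ * (ω * ((ρt ^ e - R ^ e) / e)) ≤ C * A ^ (κ + θ * e) := by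
      calc K₂ * A ^ κ * (ω * ((ρt ^ e - R ^ e) / e))
          ≤ K₂ * A ^ κ * (ω * (A ^ (θ * e) / (-e))) := by
            apply mul_le_mul_of_nonneg_left _ (mul_nonneg hK₂0 hAκ0)
            exact mul_le_mul_of_nonneg_left hJ3le hω0
      _ = ((K₂ / (-e)) * ω) * (A ^ κ * A ^ (θ * e)) := by
            field_simp
      _ = ((K₂ / (-e)) * ω) * A ^ (κ + θ * e) := by rw [hAe]
      _ ≤ C * A ^ (κ + θ * e) := mul_le_mul_of_nonneg_right hCk hT₃0
    rw [hsplitInt]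
    rw [hJ1, hJ2] at hlow1
    rw [hJ3] at hlow2
    rw [show -C * (T₁ + A ^ (κ * ((m:ℝ) - 1) / m) * T₂ + A ^ (κ + θ * e))
        = -(C * T₁ + C * (A ^ (κ * ((m:ℝ) - 1) / m) * T₂) + C * A ^ (κ + θ * e)) from by ring]
    have hfin := add_le_add hlow1 hlow2
    have hfin2 := add_le_add (add_le_add hP2 hP1) hP3
    linarith [hfin, hfin2]
  · rw [MeasureTheory.integral_undef hI]
    have hB : 0 ≤ T₁ + A ^ (κ * ((m:ℝ) - 1) / m) * T₂ + A ^ (κ + θ * e) := by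
      have := mul_nonneg hAq0 hT₂0
      linarith
    have := mul_nonneg hC0.le hB
    linarith
end
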